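/- arXiv:2305.03106 — 2 statements merged into one kernel-verified Lean document; each statement's English description precedes it below -/
import Mathlib

section
/- Let N be a binary tree-based phylogenetic network with two N-fences (a^u_1,...,a^u_{k_u}) and (a^v_1,...,a^v_{k_v}) of length at least 3 each, such that there exist directed paths in N from head(a^u_h) to tail(a^v_i) and from head(a^v_j) to tail(a^u_k) for even indices h, i, j, k with k < h and i < j. Then the auxiliary graph of every cherry cover of N contains a directed cycle; consequently N is not orchard. -/
namespace PhyloNet

/-- A binary phylogenetic network, encoded on vertex set `verts ⊆ ℕ`. -/
structure Network where
  verts : Finset ℕ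
  arc : ℕ → ℕ → Bool
  root : ℕ
  root_mem : root ∈ verts
  arc_mem : ∀ u v : ℕ, arc u v = true → u ∈ verts ∧ v ∈ verts
  acyclic : ∀ v : ℕ, ¬ Relation.TransGen (fun a b : ℕ => arc a b = true) v v
  root_indeg : (verts.filter fun u => arc u root = true).card = 0
  root_outdeg : (verts.filter fun w => arc root w = true).card = 1
  nonroot_deg : ∀ v ∈ verts, v ≠ root →
    ((verts.filter fun u => arc u v = true).card = 1 ∧
      (verts.filter fun w => arc v w = true).card = 2) ∨
    ((verts.filter fun u => arc u v = true).card = 2 ∧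
      (verts.filter fun w => arc v w = true).card = 1) ∨
    ((verts.filter fun u => arc u v = true).card = 1 ∧
      (verts.filter fun w => arc v w = true).card = 0)

def inDeg (N : Network) (v : ℕ) : ℕ := (N.verts.filter fun u => N.arc u v = true).card

def outDeg (N : Network) (v : ℕ) : ℕ := (N.verts.filter fun w => N.arc v w = true).card

def IsLeaf (N : Network) (v : ℕ) : Prop := v ∈ N.verts ∧ inDeg N v = 1 ∧ outDeg N v = 0

def IsRet (N : Network) (v : ℕ) : Prop := v ∈ N.verts ∧ inDeg N v = 2

def IsTreeVert (N : Network) (v : ℕ) : Prop := v ∈ N.verts ∧ inDeg N v = 1 ∧ outDeg N v = 2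

def IsInternal (N : Network) (v : ℕ) : Prop := v ∈ N.verts ∧ v ≠ N.root ∧ ¬ IsLeaf N v

def IsTree (N : Network) : Prop := ∀ v : ℕ, ¬ IsRet N v

noncomputable def retCount (N : Network) : ℕ := {v : ℕ | IsRet N v}.ncard

/-- Tree-child: every non-leaf vertex has a child that is a tree vertex or a leaf. -/
def IsTreeChild (N : Network) : Prop :=
  ∀ v ∈ N.verts, ¬ IsLeaf N v → ∃ w : ℕ, N.arc v w = true ∧ (IsTreeVert N w ∨ IsLeaf N w)

/-- An omnian: an internal vertex all of whose children are reticulations. -/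
def IsOmnian (N : Network) (v : ℕ) : Prop :=
  IsInternal N v ∧ ∀ w : ℕ, N.arc v w = true → IsRet N w

noncomputable def omnianCount (N : Network) : ℕ := {v : ℕ | IsOmnian N v}.ncard

/-- `N'` is obtained from `N` by adding a leaf to the arc `uv`: the arc is subdivided
by a fresh vertex `w`, and a fresh leaf `x` is attached to `w`. -/
def IsLeafAdditionOn (N N' : Network) (u v : ℕ) : Prop :=
  N.arc u v = true ∧ ∃ w x : ℕ, w ∉ N.verts ∧ x ∉ N.verts ∧ w ≠ x ∧
    N'.verts = insert w (insert x N.verts) ∧ N'.root = N.root ∧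
    ∀ a b : ℕ, (N'.arc a b = true ↔
      ((N.arc a b = true ∧ ¬ (a = u ∧ b = v)) ∨ (a = u ∧ b = w) ∨
        (a = w ∧ b = v) ∨ (a = w ∧ b = x)))

def IsLeafAddition (N N' : Network) : Prop := ∃ u v : ℕ, IsLeafAdditionOn N N' u v

/-- `N'` is obtained from `N` by adding a leaf to a reticulation arc. -/
def IsRetArcLeafAddition (N N' : Network) : Prop :=
  ∃ u v : ℕ, IsRet N v ∧ IsLeafAdditionOn N N' u v

/-- `P` holds after exactly `k` steps of relation `step` starting from `N`. -/
def ReachableBy (step : Network → Network → Prop) (N : Network) (k : ℕ)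
    (P : Network → Prop) : Prop :=
  ∃ M : ℕ → Network, M 0 = N ∧ (∀ i : ℕ, i < k → step (M i) (M (i + 1))) ∧ P (M k)

/-- The minimum number of leaf additions needed to bring `N` into the class `P`. -/
noncomputable def leafAddDist (P : Network → Prop) (N : Network) : ℕ :=
  sInf {k : ℕ | ReachableBy IsLeafAddition N k P}

noncomputable def LTC (N : Network) : ℕ := leafAddDist IsTreeChild N

/-- Reduction of a cherry (x,y): delete the leaf x and suppress its parent p
(whose own parent is q, gaining the arc q → y). -/
def ReducesCherry (N N' : Network) (x y : ℕ) : Prop :=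
  ∃ p q : ℕ, IsLeaf N x ∧ IsLeaf N y ∧ x ≠ y ∧
    N.arc p x = true ∧ N.arc p y = true ∧ N.arc q p = true ∧
    N'.verts = (N.verts.erase x).erase p ∧ N'.root = N.root ∧
    ∀ a b : ℕ, (N'.arc a b = true ↔
      (N.arc a b = true ∧ a ≠ p ∧ b ≠ p ∧ b ≠ x) ∨ (a = q ∧ b = y))

/-- Reduction of a reticulated cherry (x,y): delete the arc from the parent p_y of y
to the reticulation parent p_x of x, and clean up (suppressing p_x and p_y). -/
def ReducesRetCherry (N N' : Network) (x y : ℕ) : Prop :=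
  ∃ px py z q : ℕ, IsLeaf N x ∧ IsLeaf N y ∧ IsRet N px ∧
    N.arc px x = true ∧ N.arc py px = true ∧ N.arc py y = true ∧
    N.arc z px = true ∧ z ≠ py ∧ N.arc q py = true ∧
    N'.verts = (N.verts.erase px).erase py ∧ N'.root = N.root ∧
    ∀ a b : ℕ, (N'.arc a b = true ↔
      (N.arc a b = true ∧ a ≠ px ∧ a ≠ py ∧ b ≠ px ∧ b ≠ py) ∨
        (a = z ∧ b = x) ∨ (a = q ∧ b = y))

def CherryStep (N N' : Network) : Prop :=
  ∃ x y : ℕ, ReducesCherry N N' x y ∨ ReducesRetCherry N N' x y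

/-- A network consisting of the root and a single leaf. -/
def IsSingleLeaf (N : Network) : Prop := ∃ x : ℕ, x ≠ N.root ∧ N.verts = {N.root, x}

/-- Orchard: reducible to a single leaf by cherry and reticulated cherry reductions. -/
def IsOrchard (N : Network) : Prop :=
  ∃ N' : Network, Relation.ReflTransGen CherryStep N N' ∧ IsSingleLeaf N'

noncomputable def LOR (N : Network) : ℕ := leafAddDist IsOrchard N

/-- Tree-based: there is a spanning tree (a choice of one incoming arc for each
non-root vertex) all of whose leaves are leaves of `N`. -/
def IsTreeBased (N : Network) : Prop :=
  ∃ T : ℕ → ℕ → Bool, (∀ u v : ℕ, T u v = true → N.arc u v = true) ∧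
    (∀ v ∈ N.verts, v ≠ N.root → (N.verts.filter fun u => T u v = true).card = 1) ∧
    (∀ v ∈ N.verts, ¬ IsLeaf N v → ∃ w : ℕ, T v w = true)

noncomputable def LTB (N : Network) : ℕ := leafAddDist IsTreeBased N

/-- A zig-zag trail: a nonempty duplicate-free sequence of arcs in which
consecutive arcs share a tail or share a head. -/
def IsZigZag (N : Network) (s : List (ℕ × ℕ)) : Prop :=
  s ≠ [] ∧ s.Nodup ∧ (∀ a ∈ s, N.arc a.1 a.2 = true) ∧
    List.Chain' (fun a b : ℕ × ℕ => a.1 = b.1 ∨ a.2 = b.2) s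

def IsMaximalZigZag (N : Network) (s : List (ℕ × ℕ)) : Prop :=
  IsZigZag N s ∧ ∀ t : List (ℕ × ℕ), IsZigZag N t → s.Sublist t → t.length = s.length

/-- A W-fence: a maximal zig-zag trail of even length whose two end-arc tails
are both reticulations. -/
def IsWFence (N : Network) (s : List (ℕ × ℕ)) : Prop :=
  IsMaximalZigZag N s ∧ s.length % 2 = 0 ∧ 2 ≤ s.length ∧
    IsRet N (s.headD (0, 0)).1 ∧ IsRet N (s.getLastD (0, 0)).1

/-- An N-fence: a maximal zig-zag trail of odd length exactly one of whose
end-arc tails is a reticulation. -/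
def IsNFence (N : Network) (s : List (ℕ × ℕ)) : Prop :=
  IsMaximalZigZag N s ∧ s.length % 2 = 1 ∧
    Xor' (IsRet N (s.headD (0, 0)).1) (IsRet N (s.getLastD (0, 0)).1)

/-- A zig-zag decomposition: a set of maximal zig-zag trails partitioning the
non-root arcs of the network. -/
def IsZigZagDecomposition (N : Network) (D : Set (List (ℕ × ℕ))) : Prop :=
  (∀ s ∈ D, IsMaximalZigZag N s) ∧
  (∀ s ∈ D, ∀ p ∈ s, p.1 ≠ N.root) ∧
  (∀ a b : ℕ, N.arc a b = true → a ≠ N.root → ∃! s : List (ℕ × ℕ), s ∈ D ∧ (a, b) ∈ s)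

/-- A cherry shape: two arcs with a common tail. -/
def IsCherryShape (N : Network) (s : Set (ℕ × ℕ)) : Prop :=
  ∃ p x y : ℕ, x ≠ y ∧ N.arc p x = true ∧ N.arc p y = true ∧
    s = {(p, x), (p, y)}

/-- A reticulated cherry shape: arcs p_x x, p_y p_x, p_y y where p_x is a reticulation;
its middle arc is p_y p_x. -/
def IsRetCherryShape (N : Network) (s : Set (ℕ × ℕ)) : Prop :=
  ∃ x y px py : ℕ, IsRet N px ∧ N.arc px x = true ∧ N.arc py px = true ∧
    N.arc py y = true ∧ y ≠ px ∧ s = {(px, x), (py, px), (py, y)}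

/-- `s` is a reticulated cherry shape with middle arc `(u, r)`. -/
def IsMiddleArcOf (N : Network) (s : Set (ℕ × ℕ)) (u r : ℕ) : Prop :=
  ∃ x y : ℕ, IsRet N r ∧ N.arc r x = true ∧ N.arc u r = true ∧ N.arc u y = true ∧
    y ≠ r ∧ s = {(r, x), (u, r), (u, y)}

/-- A cherry cover: cherry shapes and reticulated cherry shapes covering every
non-root arc exactly once. -/
def IsCherryCover (N : Network) (P : Set (Set (ℕ × ℕ))) : Prop :=
  (∀ s ∈ P, IsCherryShape N s ∨ IsRetCherryShape N s) ∧
  (∀ a b : ℕ, N.arc a b = true → a ≠ N.root →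
    ∃! s : Set (ℕ × ℕ), s ∈ P ∧ (a, b) ∈ s)

/-- The internal vertices of a shape are the tails of its arcs. -/
def shapeInternals (s : Set (ℕ × ℕ)) : Set ℕ := {p : ℕ | ∃ x : ℕ, (p, x) ∈ s}

/-- The endpoints of a shape: heads of its arcs that are not tails of its arcs. -/
def shapeEndpoints (s : Set (ℕ × ℕ)) : Set ℕ :=
  {x : ℕ | (∃ p : ℕ, (p, x) ∈ s) ∧ ∀ y : ℕ, (x, y) ∉ s}

/-- In the auxiliary graph, shape `B` is directly above shape `C` if an internal
vertex of `C` is an endpoint of `B`. -/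
def DirectlyAbove (B C : Set (ℕ × ℕ)) : Prop :=
  ∃ v : ℕ, v ∈ shapeEndpoints B ∧ v ∈ shapeInternals C

/-- The auxiliary graph of the cherry cover `P` contains a directed cycle. -/
def HasCyclicAux (P : Set (Set (ℕ × ℕ))) : Prop :=
  ∃ s ∈ P, Relation.TransGen
    (fun B C : Set (ℕ × ℕ) => B ∈ P ∧ C ∈ P ∧ DirectlyAbove B C) s s

/-- A non-temporal labelling of `N`. -/
def IsNonTemporal (N : Network) (t : ℕ → ℝ) : Prop :=
  (∀ u v : ℕ, N.arc u v = true → t u ≤ t v) ∧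
  (∀ u v : ℕ, N.arc u v = true → t u = t v → IsRet N v) ∧
  (∀ u : ℕ, IsInternal N u → ∃ v : ℕ, N.arc u v = true ∧ t u < t v) ∧
  (∀ r u v : ℕ, IsRet N r → N.arc u r = true → N.arc v r = true → u ≠ v →
    ¬ (t u = t r ∧ t v = t r))

/-- An inret: a reticulation with no incoming horizontal arc
(i.e. both incoming arcs vertical). -/
def Inret (N : Network) (t : ℕ → ℝ) (r : ℕ) : Prop :=
  IsRet N r ∧ ∀ u : ℕ, N.arc u r = true → t u ≠ t r

noncomputable def inretCount (N : Network) (t : ℕ → ℝ) : ℕ := {r : ℕ | Inret N t r}.ncard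

/-- HGT-consistent labelling: a non-temporal labelling in which every reticulation
has exactly one incoming horizontal arc. -/
def IsHGTConsistent (N : Network) (t : ℕ → ℝ) : Prop :=
  IsNonTemporal N t ∧ ∀ r : ℕ, IsRet N r → ∃! u : ℕ, N.arc u r = true ∧ t u = t r

/-- V_OR: the minimum number of inrets over all non-temporal labellings. -/
noncomputable def VOR (N : Network) : ℕ :=
  sInf {k : ℕ | ∃ t : ℕ → ℝ, IsNonTemporal N t ∧ inretCount N t = k}

/-- The network `N` is the result of the vertex-cover reduction applied to `G`. -/
def IsVCReduction {α : Type} [Fintype α] [DecidableEq α] (G : SimpleGraph α)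
    (N : Network) : Prop :=
  ∃ (R W L M : α → ℕ → ℕ) (P : α → ℕ) (S : ℕ → ℕ) (rho : ℕ)
    (e : ℕ → α) (pi tau : α → α → ℕ),
    (∀ v : α, ∃! i : ℕ, 1 ≤ i ∧ i ≤ Fintype.card α ∧ e i = v) ∧
    (∀ v u : α, G.Adj v u → pi v u ∈ ({1, 2, 3} : Set ℕ)) ∧
    (∀ v u u' : α, G.Adj v u → G.Adj v u' → pi v u = pi v u' → u = u') ∧
    (∀ v u : α, G.Adj v u → tau v u ∈ ({5, 6, 7} : Set ℕ)) ∧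
    (∀ v u u' : α, G.Adj v u → G.Adj v u' → tau v u = tau v u' → u = u') ∧
    Function.Injective
      (fun z : (α × Fin 8) ⊕ (α × Fin 7) ⊕ (α × Fin 5) ⊕ (α × Fin 4) ⊕ α ⊕
          (Fin (Fintype.card α - 1)) ⊕ Unit =>
        match z with
        | Sum.inl (v, i) => R v i.1
        | Sum.inr (Sum.inl (v, i)) => W v (i.1 + 1)
        | Sum.inr (Sum.inr (Sum.inl (v, i))) => L v (i.1 + 1)
        | Sum.inr (Sum.inr (Sum.inr (Sum.inl (v, i)))) => M v (i.1 + 1)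
        | Sum.inr (Sum.inr (Sum.inr (Sum.inr (Sum.inl v)))) => P v
        | Sum.inr (Sum.inr (Sum.inr (Sum.inr (Sum.inr (Sum.inl i))))) => S (i.1 + 1)
        | Sum.inr (Sum.inr (Sum.inr (Sum.inr (Sum.inr (Sum.inr _))))) => rho) ∧
    N.root = rho ∧
    (∀ x : ℕ, x ∈ N.verts ↔
      (∃ v i, i ≤ 7 ∧ x = R v i) ∨ (∃ v i, 1 ≤ i ∧ i ≤ 7 ∧ x = W v i) ∨
      (∃ v i, 1 ≤ i ∧ i ≤ 5 ∧ x = L v i) ∨ (∃ v i, 1 ≤ i ∧ i ≤ 4 ∧ x = M v i) ∨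
      (∃ v, x = P v) ∨ (∃ i, 1 ≤ i ∧ i ≤ Fintype.card α - 1 ∧ x = S i) ∨ x = rho) ∧
    (∀ a b : ℕ, N.arc a b = true ↔
      (a = rho ∧ b = S 1) ∨
      (∃ i, 1 ≤ i ∧ i ≤ Fintype.card α - 2 ∧ a = S i ∧ b = S (i + 1)) ∨
      (∃ i, 1 ≤ i ∧ i ≤ Fintype.card α - 1 ∧ a = S i ∧ b = P (e i)) ∨
      (a = S (Fintype.card α - 1) ∧ b = P (e (Fintype.card α))) ∨
      (∃ v, a = P v ∧ (b = M v 4 ∨ b = W v 7)) ∨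
      (∃ v, a = M v 4 ∧ (b = M v 3 ∨ b = R v 0)) ∨
      (∃ v, a = M v 3 ∧ (b = M v 2 ∨ b = W v 6)) ∨
      (∃ v, a = M v 2 ∧ (b = M v 1 ∨ b = W v 5)) ∨
      (∃ v, a = M v 1 ∧ (b = R v 0 ∨ b = W v 4)) ∨
      (∃ v, a = R v 0 ∧ b = R v 1) ∨
      (∃ v i, 1 ≤ i ∧ i ≤ 6 ∧ a = W v i ∧ (b = R v i ∨ b = R v (i + 1))) ∨
      (∃ v, a = W v 7 ∧ (b = R v 7 ∨ b = L v 5)) ∨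
      (∃ v i, 1 ≤ i ∧ i ≤ 4 ∧ a = R v i ∧ b = L v i) ∨
      (∃ u v, G.Adj u v ∧ a = R u (tau u v) ∧ b = W v (pi v u)))

/-!
Along an N-fence `a` whose first tail is a reticulation, consecutive arcs alternately share a head
and a tail, since no three distinct arcs share one. Hence the common head `v` of `a (2r)` and
`a (2r+1)` is a reticulation, and in any cherry cover its out-arc lies in a reticulated cherry shape
whose middle arc ends in `v`. Inductively, the middle arc cannot be `a (2r)`: that arc is already
covered by the previous such shape (for `r = 0`, the first tail has a single child). So the forced
shapes along the fence are the reticulated cherry shapes with middle arc `a (2r+1)`, and each lies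
directly above the next. A directed path between internal vertices of two shapes yields a walk
between them in the auxiliary graph, so the two fences and the two paths close a cycle.

For the second claim, an acyclic cherry cover of the network obtained by a (reticulated) cherry
reduction lifts back: redirect the arcs of the reduced network to the original ones and add the
reduced cherry as a new shape, which is a sink of the auxiliary graph. By induction every orchard
network has an acyclic cherry cover.
-/

section Degrees

variable {N : Network} {r u v w x a b : ℕ}

theorem Network.ne_of_arc (h : N.arc u v = true) : u ≠ v := by
  rintro rfl
  exact N.acyclic u (.single h)

theorem Network.arc_asymm (h : N.arc u v = true) : ¬ N.arc v u = true := fun h' =>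
  N.acyclic u (.head h (.single h'))

theorem Network.mem_parents (h : N.arc u v = true) :
    u ∈ N.verts.filter fun u => N.arc u v = true :=
  Finset.mem_filter.2 ⟨(N.arc_mem u v h).1, h⟩

theorem Network.mem_children (h : N.arc u v = true) :
    v ∈ N.verts.filter fun w => N.arc u w = true :=
  Finset.mem_filter.2 ⟨(N.arc_mem u v h).2, h⟩

theorem Network.head_ne_root (h : N.arc u v = true) : v ≠ N.root := by
  rintro rfl
  simpa [Finset.card_eq_zero.1 N.root_indeg] using N.mem_parents h

theorem Network.ne_root_of_two_children (ha : N.arc v a = true) (hb : N.arc v b = true)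
    (hab : a ≠ b) : v ≠ N.root := by
  rintro rfl
  exact hab (Finset.card_le_one.1 N.root_outdeg.le _ (N.mem_children ha) _ (N.mem_children hb))

theorem inDeg_le_two (hv : v ∈ N.verts) : inDeg N v ≤ 2 := by
  by_cases hr : v = N.root
  · simp [inDeg, hr, N.root_indeg]
  · rcases N.nonroot_deg v hv hr with ⟨h, -⟩ | ⟨h, -⟩ | ⟨h, -⟩ <;> simp [inDeg, h]

theorem outDeg_le_two (hv : v ∈ N.verts) : outDeg N v ≤ 2 := by
  by_cases hr : v = N.root
  · simp [outDeg, hr, N.root_outdeg]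
  · rcases N.nonroot_deg v hv hr with ⟨-, h⟩ | ⟨-, h⟩ | ⟨-, h⟩ <;> simp [outDeg, h]

theorem Network.parent_eq_or_eq (hu : N.arc u v = true) (hw : N.arc w v = true) (huw : u ≠ w)
    (h : N.arc x v = true) : x = u ∨ x = w := by
  by_contra! hx
  refine (inDeg_le_two (N.arc_mem u v hu).2).not_gt (Finset.two_lt_card.2 ?_)
  exact ⟨x, N.mem_parents h, u, N.mem_parents hu, w, N.mem_parents hw, hx.1, hx.2, huw⟩

theorem Network.child_eq_or_eq (ha : N.arc v a = true) (hb : N.arc v b = true) (hab : a ≠ b)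
    (h : N.arc v x = true) : x = a ∨ x = b := by
  by_contra! hx
  refine (outDeg_le_two (N.arc_mem v a ha).1).not_gt (Finset.two_lt_card.2 ?_)
  exact ⟨x, N.mem_children h, a, N.mem_children ha, b, N.mem_children hb, hx.1, hx.2, hab⟩

theorem isRet_of_two_parents (hu : N.arc u v = true) (hw : N.arc w v = true) (huw : u ≠ w) :
    IsRet N v := by
  have hv := (N.arc_mem u v hu).2
  refine ⟨hv, (inDeg_le_two hv).antisymm (Finset.one_lt_card.2 ?_)⟩
  exact ⟨u, N.mem_parents hu, w, N.mem_parents hw, huw⟩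

theorem IsRet.ne_root (hr : IsRet N r) : r ≠ N.root := by
  rintro rfl
  simpa [inDeg, N.root_indeg] using hr.2

theorem IsRet.outDeg_eq_one (hr : IsRet N r) : outDeg N r = 1 := by
  have h := hr.2
  rcases N.nonroot_deg r hr.1 hr.ne_root with ⟨h1, -⟩ | ⟨-, h2⟩ | ⟨h1, -⟩ <;>
    simp_all [inDeg, outDeg]

theorem IsRet.exists_two_parents (hr : IsRet N v) :
    ∃ u w, u ≠ w ∧ N.arc u v = true ∧ N.arc w v = true := by
  obtain ⟨u, hu, w, hw, huw⟩ := Finset.one_lt_card.1 (hr.2 ▸ Nat.one_lt_two : 1 < inDeg N v)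
  exact ⟨u, w, huw, (Finset.mem_filter.1 hu).2, (Finset.mem_filter.1 hw).2⟩

theorem IsRet.eq_of_arc (hr : IsRet N r) (ha : N.arc r a = true) (hb : N.arc r b = true) :
    a = b :=
  Finset.card_le_one.1 hr.outDeg_eq_one.le _ (N.mem_children ha) _ (N.mem_children hb)

theorem IsRet.exists_arc (hr : IsRet N r) : ∃ c, N.arc r c = true := by
  obtain ⟨c, hc⟩ := Finset.card_pos.1 (hr.outDeg_eq_one ▸ Nat.one_pos : 0 < outDeg N r)
  exact ⟨c, (Finset.mem_filter.1 hc).2⟩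

theorem IsLeaf.not_arc (hx : IsLeaf N x) : ¬ N.arc x b = true := fun h => by
  simpa [Finset.card_eq_zero.1 hx.2.2] using N.mem_children h

theorem IsLeaf.parent_unique (hx : IsLeaf N x) (hu : N.arc u x = true) (hw : N.arc w x = true) :
    u = w :=
  Finset.card_le_one.1 hx.2.1.le _ (N.mem_parents hu) _ (N.mem_parents hw)

theorem Network.parent_unique_of_two_children (ha : N.arc v a = true) (hb : N.arc v b = true)
    (hab : a ≠ b) (hu : N.arc u v = true) (hw : N.arc w v = true) : u = w := by
  have hv := (N.arc_mem v a ha).1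
  have hout : 1 < outDeg N v :=
    Finset.one_lt_card.2 ⟨a, N.mem_children ha, b, N.mem_children hb, hab⟩
  have hin : inDeg N v = 1 := by
    rcases N.nonroot_deg v hv (N.ne_root_of_two_children ha hb hab) with
      ⟨h, -⟩ | ⟨-, h⟩ | ⟨-, h⟩ <;> simp_all [inDeg, outDeg]
  exact Finset.card_le_one.1 hin.le _ (N.mem_parents hu) _ (N.mem_parents hw)

end Degrees

section CherryCover

variable {N : Network} {P : Set (Set (ℕ × ℕ))} {S T : Set (ℕ × ℕ)} {r u v a b c : ℕ}

@[simp]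
theorem shapeInternals_insert (e : ℕ × ℕ) (S : Set (ℕ × ℕ)) :
    shapeInternals (insert e S) = insert e.1 (shapeInternals S) := by
  ext v
  simp [shapeInternals, Prod.ext_iff, exists_or, eq_comm]

@[simp]
theorem shapeInternals_singleton (e : ℕ × ℕ) : shapeInternals {e} = {e.1} := by
  ext v
  simp [shapeInternals, Prod.ext_iff, eq_comm]

@[simp]
theorem shapeInternals_image_prodMap (f : ℕ → ℕ) (S : Set (ℕ × ℕ)) :
    shapeInternals (Prod.map id f '' S) = shapeInternals S := by
  ext v
  simp only [shapeInternals, Set.mem_image, Prod.exists, Prod.map_apply, id_eq, Prod.mk.injEq,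
    Set.mem_ofPred_eq]
  exact ⟨fun ⟨_, a, b, h, ha, _⟩ => ⟨b, ha ▸ h⟩, fun ⟨b, h⟩ => ⟨f b, v, b, h, rfl, rfl⟩⟩

abbrev AuxAdj (P : Set (Set (ℕ × ℕ))) (B C : Set (ℕ × ℕ)) : Prop :=
  B ∈ P ∧ C ∈ P ∧ DirectlyAbove B C

theorem arc_of_mem_shape (hS : IsCherryShape N S ∨ IsRetCherryShape N S) (h : (a, b) ∈ S) :
    N.arc a b = true := by
  rcases hS with ⟨p, x, y, -, hx, hy, rfl⟩ | ⟨x, y, px, py, -, hx, hpx, hy, -, rfl⟩ <;>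
    simp only [Set.mem_insert_iff, Set.mem_singleton_iff, Prod.mk.injEq] at h
  · rcases h with ⟨rfl, rfl⟩ | ⟨rfl, rfl⟩ <;> assumption
  · rcases h with ⟨rfl, rfl⟩ | ⟨rfl, rfl⟩ | ⟨rfl, rfl⟩ <;> assumption

theorem ne_root_of_mem_shape (hS : IsCherryShape N S ∨ IsRetCherryShape N S) (h : (a, b) ∈ S) :
    a ≠ N.root := by
  rcases hS with ⟨p, x, y, hxy, hx, hy, rfl⟩ | ⟨x, y, px, py, hr, -, hpx, hy, hne, rfl⟩ <;>
    simp only [Set.mem_insert_iff, Set.mem_singleton_iff, Prod.mk.injEq] at h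
  · rcases h with ⟨rfl, -⟩ | ⟨rfl, -⟩ <;> exact N.ne_root_of_two_children hx hy hxy
  · rcases h with ⟨rfl, -⟩ | ⟨rfl, -⟩ | ⟨rfl, -⟩
    · exact hr.ne_root
    all_goals exact N.ne_root_of_two_children hpx hy hne.symm

namespace IsCherryCover

variable (hP : IsCherryCover N P)
include hP

theorem arc_of_mem (hS : S ∈ P) (h : (a, b) ∈ S) : N.arc a b = true :=
  arc_of_mem_shape (hP.1 S hS) h

theorem eq_of_mem {e : ℕ × ℕ} (hS : S ∈ P) (hT : T ∈ P) (heS : e ∈ S) (heT : e ∈ T) : S = T :=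
  (hP.2 e.1 e.2 (hP.arc_of_mem hS heS) (ne_root_of_mem_shape (hP.1 S hS) heS)).unique ⟨hS, heS⟩
    ⟨hT, heT⟩

theorem exists_mem (h : N.arc a b = true) (ha : a ≠ N.root) : ∃ S ∈ P, (a, b) ∈ S :=
  (hP.2 a b h ha).exists

theorem mem_of_arc (hS : S ∈ P) (h : (u, a) ∈ S) (hb : N.arc u b = true) : (u, b) ∈ S := by
  rcases hP.1 S hS with ⟨p, x, y, hxy, hx, hy, rfl⟩ | ⟨x, y, px, py, hr, hx, hpx, hy, hne, rfl⟩ <;>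
    simp only [Set.mem_insert_iff, Set.mem_singleton_iff, Prod.mk.injEq] at h ⊢
  · rcases h with ⟨rfl, -⟩ | ⟨rfl, -⟩ <;> simpa using N.child_eq_or_eq hx hy hxy hb
  · rcases h with ⟨rfl, -⟩ | ⟨rfl, -⟩ | ⟨rfl, -⟩
    · simp [hr.eq_of_arc hb hx]
    all_goals
      rcases N.child_eq_or_eq hpx hy hne.symm hb with rfl | rfl <;> simp

theorem eq_of_mem_shapeInternals (hS : S ∈ P) (hT : T ∈ P) (hvS : v ∈ shapeInternals S)
    (hvT : v ∈ shapeInternals T) : S = T := by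
  obtain ⟨a, ha⟩ := hvS
  obtain ⟨b, hb⟩ := hvT
  exact hP.eq_of_mem hS hT (hP.mem_of_arc hS ha (hP.arc_of_mem hT hb)) hb

theorem exists_retCherry_of_isRet (hr : IsRet N r) (hc : N.arc r c = true) :
    ∃ u y, {(r, c), (u, r), (u, y)} ∈ P ∧ N.arc u r = true ∧ N.arc u y = true ∧ y ≠ r := by
  obtain ⟨S, hS, hcS⟩ := hP.exists_mem hc hr.ne_root
  rcases hP.1 S hS with ⟨p, x, y, hxy, hx, hy, rfl⟩ | ⟨x, y, px, py, -, -, hpx, hy, hne, rfl⟩ <;>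
    simp only [Set.mem_insert_iff, Set.mem_singleton_iff, Prod.mk.injEq] at hcS
  · rcases hcS with ⟨rfl, -⟩ | ⟨rfl, -⟩ <;> exact absurd (hr.eq_of_arc hx hy) hxy
  · rcases hcS with ⟨rfl, rfl⟩ | ⟨rfl, -⟩ | ⟨rfl, -⟩
    · exact ⟨py, y, hS, hpx, hy, hne⟩
    all_goals exact absurd (hr.eq_of_arc hy hpx) hne

theorem reflTransGen_auxAdj_of_path
    (hpath : Relation.ReflTransGen (fun a b : ℕ => N.arc a b = true) u v)
    (hS : S ∈ P) (hu : u ∈ shapeInternals S) (hT : T ∈ P) (hv : v ∈ shapeInternals T) :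
    Relation.ReflTransGen (AuxAdj P) S T := by
  induction hpath using Relation.ReflTransGen.head_induction_on generalizing S with
  | refl => rw [hP.eq_of_mem_shapeInternals hS hT hu hv]
  | @head u c huc hcv ih =>
    obtain ⟨a, ha⟩ := hu
    have hucS : (u, c) ∈ S := hP.mem_of_arc hS ha huc
    obtain ⟨S', hS', hcS'⟩ : ∃ S' ∈ P, c ∈ shapeInternals S' := by
      rcases hcv.cases_head with rfl | ⟨z, hcz, -⟩
      · exact ⟨T, hT, hv⟩
      · obtain ⟨S', hS', hczS'⟩ := hP.exists_mem hcz (N.head_ne_root huc)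
        exact ⟨S', hS', z, hczS'⟩
    by_cases hcS : c ∈ shapeInternals S
    · rw [hP.eq_of_mem_shapeInternals hS hS' hcS hcS']
      exact ih hS' hcS'
    · exact .head ⟨hS, hS', c, ⟨⟨u, hucS⟩, fun y hy => hcS ⟨y, hy⟩⟩, hcS'⟩ (ih hS' hcS')

end IsCherryCover

end CherryCover

section Fences

variable {N : Network} {A : List (ℕ × ℕ)} {m n r u v : ℕ}

theorem Network.eq_or_eq_of_head_eq {e₁ e₂ e : ℕ × ℕ} (h₁ : N.arc e₁.1 e₁.2 = true)
    (h₂ : N.arc e₂.1 e₂.2 = true) (h : N.arc e.1 e.2 = true) (h₁₂ : e₁.2 = e₂.2)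
    (he : e.2 = e₁.2) (hne : e₁ ≠ e₂) : e = e₁ ∨ e = e₂ := by
  rw [h₁₂] at h₁ he
  have ht : e₁.1 ≠ e₂.1 := fun ht => hne (Prod.ext ht h₁₂)
  rcases N.parent_eq_or_eq h₁ h₂ ht (he ▸ h) with ht' | ht'
  exacts [.inl (Prod.ext ht' (he.trans h₁₂.symm)), .inr (Prod.ext ht' he)]

theorem Network.eq_or_eq_of_tail_eq {e₁ e₂ e : ℕ × ℕ} (h₁ : N.arc e₁.1 e₁.2 = true)
    (h₂ : N.arc e₂.1 e₂.2 = true) (h : N.arc e.1 e.2 = true) (h₁₂ : e₁.1 = e₂.1)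
    (he : e.1 = e₁.1) (hne : e₁ ≠ e₂) : e = e₁ ∨ e = e₂ := by
  rw [h₁₂] at h₁ he
  have hh : e₁.2 ≠ e₂.2 := fun hh => hne (Prod.ext h₁₂ hh)
  rcases N.child_eq_or_eq h₁ h₂ hh (he ▸ h) with hh' | hh'
  exacts [.inl (Prod.ext (he.trans h₁₂.symm) hh'), .inr (Prod.ext he hh')]

namespace IsZigZag

variable (hA : IsZigZag N A)
include hA

theorem arc_getD (hn : n < A.length) :
    N.arc (A.getD n (0, 0)).1 (A.getD n (0, 0)).2 = true := by
  rw [List.getD_eq_getElem _ _ hn]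
  exact hA.2.2.1 _ (List.getElem_mem hn)

theorem getD_ne (hm : m < A.length) (hn : n < A.length) (hmn : m ≠ n) :
    A.getD m (0, 0) ≠ A.getD n (0, 0) := by
  rw [List.getD_eq_getElem _ _ hm, List.getD_eq_getElem _ _ hn]
  exact fun h => hmn (hA.2.1.getElem_inj_iff.1 h)

theorem tail_eq_or_head_eq (hn : n + 1 < A.length) :
    (A.getD n (0, 0)).1 = (A.getD (n + 1) (0, 0)).1 ∨
      (A.getD n (0, 0)).2 = (A.getD (n + 1) (0, 0)).2 := by
  rw [List.getD_eq_getElem _ _ hn, List.getD_eq_getElem _ _ (by omega)]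
  exact hA.2.2.2.getElem n hn

theorem alternates (h₀ : IsRet N (A.getD 0 (0, 0)).1) (hn : n + 1 < A.length) :
    if Even n then (A.getD n (0, 0)).2 = (A.getD (n + 1) (0, 0)).2
    else (A.getD n (0, 0)).1 = (A.getD (n + 1) (0, 0)).1 := by
  induction n with
  | zero =>
    rw [if_pos Even.zero]
    refine (hA.tail_eq_or_head_eq hn).resolve_left fun ht => hA.getD_ne (by omega) hn
      zero_ne_one (Prod.ext ht ?_)
    exact h₀.eq_of_arc (hA.arc_getD (by omega)) (ht ▸ hA.arc_getD hn)
  | succ n ih =>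
    have ih := ih (by omega)
    have a₀ := hA.arc_getD (n := n) (by omega)
    have a₁ := hA.arc_getD (n := n + 1) (by omega)
    have a₂ := hA.arc_getD hn
    have d₀₁ := hA.getD_ne (m := n) (n := n + 1) (by omega) (by omega) (by omega)
    have d₀₂ := hA.getD_ne (m := n + 2) (n := n) hn (by omega) (by omega)
    have d₁₂ := hA.getD_ne (m := n + 2) (n := n + 1) hn (by omega) (by omega)
    rcases Nat.even_or_odd n with hev | hodd
    · rw [if_pos hev] at ih
      rw [if_neg (Nat.not_even_iff_odd.2 hev.add_one)]
      refine (hA.tail_eq_or_head_eq hn).resolve_right fun hh => ?_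
      rcases N.eq_or_eq_of_head_eq a₀ a₁ a₂ ih (hh.symm.trans ih.symm) d₀₁ with h | h
      exacts [d₀₂ h, d₁₂ h]
    · rw [if_neg (Nat.not_even_iff_odd.2 hodd)] at ih
      rw [if_pos hodd.add_one]
      refine (hA.tail_eq_or_head_eq hn).resolve_left fun ht => ?_
      rcases N.eq_or_eq_of_tail_eq a₀ a₁ a₂ ih (ht.symm.trans ih.symm) d₀₁ with h | h
      exacts [d₀₂ h, d₁₂ h]

theorem head_eq (h₀ : IsRet N (A.getD 0 (0, 0)).1) (hr : 2 * r + 1 < A.length) :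
    (A.getD (2 * r) (0, 0)).2 = (A.getD (2 * r + 1) (0, 0)).2 := by
  simpa using hA.alternates h₀ hr

theorem tail_eq (h₀ : IsRet N (A.getD 0 (0, 0)).1) (hr : 2 * r + 2 < A.length) :
    (A.getD (2 * r + 1) (0, 0)).1 = (A.getD (2 * r + 2) (0, 0)).1 := by
  simpa [Nat.not_even_iff_odd] using hA.alternates h₀ hr

end IsZigZag

end Fences

section FenceShapes

variable {N : Network} {P : Set (Set (ℕ × ℕ))} {A B : List (ℕ × ℕ)} {S S' : Set (ℕ × ℕ)}
  {r r' h i j k t₀ t₁ v g c : ℕ}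

/-- In the paper's 1-indexed notation: the reticulated cherry shape with middle arc `a_{2r+2}`
and third arc `a_{2r+3}` of the fence `A`. -/
def IsFenceShape (P : Set (Set (ℕ × ℕ))) (A : List (ℕ × ℕ)) (r : ℕ) (S : Set (ℕ × ℕ)) : Prop :=
  S ∈ P ∧ ∃ c, S = {((A.getD (2 * r + 1) (0, 0)).2, c), A.getD (2 * r + 1) (0, 0),
    A.getD (2 * r + 2) (0, 0)}

theorem IsFenceShape.getD_mem (hS : IsFenceShape P A r S) : A.getD (2 * r + 1) (0, 0) ∈ S := by
  obtain ⟨-, c, rfl⟩ := hS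
  exact Set.mem_insert_of_mem _ (Set.mem_insert _ _)

theorem IsFenceShape.head_mem_shapeInternals (hS : IsFenceShape P A r S) :
    (A.getD (2 * r + 1) (0, 0)).2 ∈ shapeInternals S := by
  obtain ⟨-, c, rfl⟩ := hS
  simp

theorem IsFenceShape.tail_mem_shapeInternals (hS : IsFenceShape P A r S) :
    (A.getD (2 * r + 1) (0, 0)).1 ∈ shapeInternals S := by
  obtain ⟨-, c, rfl⟩ := hS
  simp

theorem IsFenceShape.auxAdj_succ (hA : IsZigZag N A) (h₀ : IsRet N (A.getD 0 (0, 0)).1)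
    (hr : 2 * r + 4 < A.length) (hS : IsFenceShape P A r S)
    (hS' : IsFenceShape P A (r + 1) S') : AuxAdj P S S' := by
  obtain ⟨hSP, c, rfl⟩ := hS
  refine ⟨hSP, hS'.1, (A.getD (2 * r + 2) (0, 0)).2,
    ⟨⟨(A.getD (2 * r + 2) (0, 0)).1, Set.mem_insert_of_mem _ (Set.mem_insert_of_mem _ rfl)⟩,
      fun y hy => ?_⟩, ?_⟩
  · have ht := hA.tail_eq h₀ (r := r) (by omega)
    have a₂ := hA.arc_getD (n := 2 * r + 2) (by omega)
    simp only [Set.mem_insert_iff, Set.mem_singleton_iff, Prod.ext_iff] at hy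
    rcases hy with ⟨h, -⟩ | ⟨h, -⟩ | ⟨h, -⟩
    · exact hA.getD_ne (m := 2 * r + 1) (by omega) (by omega) (by omega) (Prod.ext ht h.symm)
    · exact N.ne_of_arc a₂ (ht ▸ h).symm
    · exact N.ne_of_arc a₂ h.symm
  · have := hS'.head_mem_shapeInternals
    rwa [← hA.head_eq h₀ (by omega)] at this

namespace IsCherryCover

variable (hP : IsCherryCover N P)
include hP

theorem retCherry_mem_of_blocked (h₀ : N.arc t₀ v = true) (h₁ : N.arc t₁ v = true)
    (hg : N.arc t₁ g = true) (ht : t₀ ≠ t₁) (hgv : g ≠ v) (hc : N.arc v c = true)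
    (hblock : ∃ T ∈ P, (t₀, v) ∈ T ∧ v ∉ shapeInternals T) :
    {(v, c), (t₁, v), (t₁, g)} ∈ P := by
  obtain ⟨u, y, hS, hu, hy, hyv⟩ :=
    hP.exists_retCherry_of_isRet (isRet_of_two_parents h₀ h₁ ht) hc
  rcases N.parent_eq_or_eq h₀ h₁ ht hu with rfl | rfl
  · obtain ⟨T, hT, h₀T, hvT⟩ := hblock
    obtain rfl := hP.eq_of_mem hS hT (by simp) h₀T
    exact absurd (by simp) hvT
  · obtain rfl := (N.child_eq_or_eq h₁ hg hgv.symm hy).resolve_left hyv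
    exact hS

theorem exists_isFenceShape_of_blocked (hA : IsZigZag N A) (h₀ : IsRet N (A.getD 0 (0, 0)).1)
    (hr : 2 * r + 2 < A.length)
    (hblock : ∃ T ∈ P, A.getD (2 * r) (0, 0) ∈ T ∧ (A.getD (2 * r) (0, 0)).2 ∉ shapeInternals T) :
    ∃ S, IsFenceShape P A r S := by
  have hv := hA.head_eq h₀ (r := r) (by omega)
  have ht := hA.tail_eq h₀ hr
  have a₀ := hA.arc_getD (n := 2 * r) (by omega)
  have a₁ := hA.arc_getD (n := 2 * r + 1) (by omega)
  have a₂ := hA.arc_getD hr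
  obtain ⟨T, hT, h₀T, hvT⟩ := hblock
  rw [hv] at a₀ hvT
  rw [← ht] at a₂
  have ht₀₁ : (A.getD (2 * r) (0, 0)).1 ≠ (A.getD (2 * r + 1) (0, 0)).1 := fun h =>
    hA.getD_ne (by omega) (by omega) (by omega) (Prod.ext h hv)
  have hgv : (A.getD (2 * r + 2) (0, 0)).2 ≠ (A.getD (2 * r + 1) (0, 0)).2 := fun h =>
    hA.getD_ne hr (by omega) (by omega) (Prod.ext ht.symm h)
  obtain ⟨c, hc⟩ := (isRet_of_two_parents a₀ a₁ ht₀₁).exists_arc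
  refine ⟨_, hP.retCherry_mem_of_blocked a₀ a₁ a₂ ht₀₁ hgv hc ⟨T, hT, ?_, hvT⟩, c, ?_⟩
  · rw [← hv]
    exact h₀T
  · rw [show A.getD (2 * r + 2) (0, 0) = ((A.getD (2 * r + 1) (0, 0)).1,
      (A.getD (2 * r + 2) (0, 0)).2) from Prod.ext ht.symm rfl]

theorem exists_isFenceShape (hA : IsZigZag N A) (h₀ : IsRet N (A.getD 0 (0, 0)).1)
    (hr : 2 * r + 2 < A.length) : ∃ S, IsFenceShape P A r S := by
  refine hP.exists_isFenceShape_of_blocked hA h₀ hr ?_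
  induction r with
  | zero =>
    obtain ⟨c, hc⟩ := h₀.exists_arc
    have a₀ := hA.arc_getD (n := 0) (by omega)
    obtain ⟨u, y, hT, hu, -, -⟩ := hP.exists_retCherry_of_isRet h₀ a₀
    refine ⟨_, hT, by simp, ?_⟩
    simp only [shapeInternals_insert, shapeInternals_singleton, Set.mem_insert_iff,
      Set.mem_singleton_iff, or_self, not_or]
    exact ⟨(N.ne_of_arc a₀).symm, fun h => N.arc_asymm hu (h ▸ a₀)⟩
  | succ r ih =>
    obtain ⟨S, hS, c, rfl⟩ := hP.exists_isFenceShape_of_blocked hA h₀ (by omega) (ih (by omega))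
    have ht := hA.tail_eq h₀ (r := r) (by omega)
    have a₂ := hA.arc_getD (n := 2 * r + 2) (by omega)
    rw [show 2 * (r + 1) = 2 * r + 2 by ring]
    refine ⟨_, hS, by simp, ?_⟩
    simp only [shapeInternals_insert, shapeInternals_singleton, Set.mem_insert_iff,
      Set.mem_singleton_iff, not_or]
    refine ⟨fun h => hA.getD_ne (m := 2 * r + 1) (by omega) (by omega) (by omega)
      (Prod.ext ht h.symm), fun h => N.ne_of_arc a₂ (ht ▸ h).symm, (N.ne_of_arc a₂).symm⟩

theorem reflTransGen_of_isFenceShape (hA : IsZigZag N A) (h₀ : IsRet N (A.getD 0 (0, 0)).1)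
    (hrr' : r ≤ r') (hr' : 2 * r' + 2 < A.length) (hS : IsFenceShape P A r S)
    (hS' : IsFenceShape P A r' S') : Relation.ReflTransGen (AuxAdj P) S S' := by
  induction r', hrr' using Nat.le_induction generalizing S' with
  | base => rw [hP.eq_of_mem hS.1 hS'.1 hS.getD_mem hS'.getD_mem]
  | succ r' hrr' ih =>
    obtain ⟨S'', hS''⟩ := hP.exists_isFenceShape hA h₀ (r := r') (by omega)
    exact (ih (by omega) hS'').tail (hS''.auxAdj_succ hA h₀ (by omega) hS')

theorem transGen_of_isFenceShape (hA : IsZigZag N A) (h₀ : IsRet N (A.getD 0 (0, 0)).1)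
    (hrr' : r < r') (hr' : 2 * r' + 2 < A.length) (hS : IsFenceShape P A r S)
    (hS' : IsFenceShape P A r' S') : Relation.TransGen (AuxAdj P) S S' := by
  obtain ⟨S₁, hS₁⟩ := hP.exists_isFenceShape hA h₀ (r := r + 1) (by omega)
  exact .head' (hS.auxAdj_succ hA h₀ (by omega) hS₁)
    (hP.reflTransGen_of_isFenceShape hA h₀ hrr' hr' hS₁ hS')

theorem hasCyclicAux_of_fence_paths (hA : IsZigZag N A) (hB : IsZigZag N B)
    (hA₀ : IsRet N (A.getD 0 (0, 0)).1) (hB₀ : IsRet N (B.getD 0 (0, 0)).1)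
    (hkh : k < h) (hij : i < j) (hh : 2 * h + 2 < A.length) (hj : 2 * j + 2 < B.length)
    (path₁ : Relation.ReflTransGen (fun a b : ℕ => N.arc a b = true)
      (A.getD (2 * h + 1) (0, 0)).2 (B.getD (2 * i + 1) (0, 0)).1)
    (path₂ : Relation.ReflTransGen (fun a b : ℕ => N.arc a b = true)
      (B.getD (2 * j + 1) (0, 0)).2 (A.getD (2 * k + 1) (0, 0)).1) :
    HasCyclicAux P := by
  obtain ⟨Sk, hSk⟩ := hP.exists_isFenceShape hA hA₀ (r := k) (by omega)
  obtain ⟨Sh, hSh⟩ := hP.exists_isFenceShape hA hA₀ hh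
  obtain ⟨Si, hSi⟩ := hP.exists_isFenceShape hB hB₀ (r := i) (by omega)
  obtain ⟨Sj, hSj⟩ := hP.exists_isFenceShape hB hB₀ hj
  have hShSi := hP.reflTransGen_auxAdj_of_path path₁ hSh.1 hSh.head_mem_shapeInternals hSi.1
    hSi.tail_mem_shapeInternals
  have hSjSk := hP.reflTransGen_auxAdj_of_path path₂ hSj.1 hSj.head_mem_shapeInternals hSk.1
    hSk.tail_mem_shapeInternals
  have hSiSj := hP.reflTransGen_of_isFenceShape hB hB₀ hij.le hj hSi hSj
  exact ⟨Sk, hSk.1, (hP.transGen_of_isFenceShape hA hA₀ hkh hh hSk hSh).trans_left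
    (hShSi.trans (hSiSj.trans hSjSk))⟩

end IsCherryCover

end FenceShapes

section LiftShapes

variable {N M : Network} {S S₁ S₂ : Set (ℕ × ℕ)} {f : ℕ → ℕ} {v : ℕ}

def HasAcyclicCherryCover (N : Network) : Prop :=
  ∃ P : Set (Set (ℕ × ℕ)), IsCherryCover N P ∧ ¬ HasCyclicAux P

variable (harc : ∀ a b, M.arc a b = true → N.arc a (f b) = true)
  (hfix : ∀ v ∈ M.verts, f v = v ∨ f v ∉ M.verts)

include harc in
theorem isRet_of_lift (hr : IsRet M v) (hv : f v = v) : IsRet N v := by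
  obtain ⟨u, w, huw, hu, hw⟩ := hr.exists_two_parents
  exact isRet_of_two_parents (hv ▸ harc _ _ hu) (hv ▸ harc _ _ hw) huw

include harc in
theorem isCherryShape_image (hinj : Set.InjOn f M.verts) (hS : IsCherryShape M S) :
    IsCherryShape N (Prod.map id f '' S) := by
  obtain ⟨p, x, y, hxy, hx, hy, rfl⟩ := hS
  refine ⟨p, f x, f y, fun h => hxy (hinj (M.arc_mem _ _ hx).2 (M.arc_mem _ _ hy).2 h),
    harc _ _ hx, harc _ _ hy, ?_⟩
  simp [Set.image_insert_eq]

include harc hfix in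
theorem isRetCherryShape_image (hret : ∀ v, IsRet M v → f v = v) (hS : IsRetCherryShape M S) :
    IsRetCherryShape N (Prod.map id f '' S) := by
  obtain ⟨x, y, px, py, hr, hx, hpx, hy, hne, rfl⟩ := hS
  have hfpx := hret px hr
  refine ⟨f x, f y, px, py, isRet_of_lift harc hr hfpx, harc _ _ hx,
    hfpx ▸ harc _ _ hpx, harc _ _ hy, fun h => ?_, by simp [Set.image_insert_eq, hfpx]⟩
  rcases hfix y (M.arc_mem _ _ hy).2 with hfy | hfy
  · exact hne (hfy ▸ h)
  · exact hfy (h ▸ hr.1)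

include hfix in
theorem directlyAbove_of_image (hS₁ : IsCherryShape M S₁ ∨ IsRetCherryShape M S₁)
    (hS₂ : IsCherryShape M S₂ ∨ IsRetCherryShape M S₂)
    (h : DirectlyAbove (Prod.map id f '' S₁) (Prod.map id f '' S₂)) : DirectlyAbove S₁ S₂ := by
  obtain ⟨v, ⟨⟨u, ⟨a, b⟩, hab, huv⟩, hnot⟩, hv⟩ := h
  simp only [shapeInternals_image_prodMap, Prod.map_apply, id_eq, Prod.mk.injEq] at hv huv hnot
  obtain ⟨rfl, rfl⟩ := huv
  obtain ⟨w, hw⟩ := hv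
  have hb : f b = b := (hfix b (M.arc_mem _ _ (arc_of_mem_shape hS₁ hab)).2).resolve_right
    fun hb => hb (M.arc_mem _ _ (arc_of_mem_shape hS₂ hw)).1
  refine ⟨f b, ⟨⟨a, by rwa [hb]⟩, fun y hy => hnot (f y) ⟨(f b, y), hy, rfl⟩⟩, w, hw⟩

end LiftShapes

section LiftCover

variable {N M : Network} {P : Set (Set (ℕ × ℕ))} {S₀ : Set (ℕ × ℕ)} {f : ℕ → ℕ}

theorem isCherryCover_insert_image (hP : IsCherryCover M P) (hroot : M.root = N.root)
    (harc : ∀ a b, M.arc a b = true → N.arc a (f b) = true) (hinj : Set.InjOn f M.verts)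
    (hfix : ∀ v ∈ M.verts, f v = v ∨ f v ∉ M.verts) (hret : ∀ v, IsRet M v → f v = v)
    (hS₀ : IsCherryShape N S₀ ∨ IsRetCherryShape N S₀)
    (hdel : ∀ v ∈ shapeInternals S₀, v ∉ M.verts)
    (hcover : ∀ a b, N.arc a b = true → (a, b) ∈ S₀ ∨ ∃ b', M.arc a b' = true ∧ f b' = b) :
    IsCherryCover N (insert S₀ ((Prod.map id f '' ·) '' P)) := by
  have hM : ∀ S ∈ P, ∀ a b, (a, b) ∈ Prod.map id f '' S → a ∈ M.verts ∧ a ∉ shapeInternals S₀ :=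
    fun S hS a b ⟨e, he, hab⟩ => by
      obtain rfl : e.1 = a := congrArg Prod.fst hab
      have ha := (M.arc_mem _ _ (hP.arc_of_mem hS he)).1
      exact ⟨ha, fun h => hdel _ h ha⟩
  refine ⟨?_, fun a b hab ha => ?_⟩
  · rintro S (rfl | ⟨S, hS, rfl⟩)
    · exact hS₀
    · exact (hP.1 S hS).imp (isCherryShape_image harc hinj)
        (isRetCherryShape_image harc hfix hret)
  rcases hcover a b hab with h₀ | ⟨b', hb', rfl⟩
  · refine ⟨S₀, ⟨Set.mem_insert _ _, h₀⟩, ?_⟩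
    rintro T ⟨rfl | ⟨S, hS, rfl⟩, hT⟩
    · rfl
    · exact absurd ⟨b, h₀⟩ (hM S hS a b hT).2
  obtain ⟨S, ⟨hS, hab'⟩, huniq⟩ := hP.2 a b' hb' (hroot ▸ ha)
  refine ⟨_, ⟨Set.mem_insert_of_mem _ ⟨S, hS, rfl⟩, (a, b'), hab', rfl⟩, ?_⟩
  rintro T ⟨rfl | ⟨S', hS', rfl⟩, hT⟩
  · exact absurd ⟨_, hT⟩ fun h => hdel a h (M.arc_mem _ _ hb').1
  · obtain ⟨⟨a', b''⟩, he, hab''⟩ := hT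
    simp only [Prod.map_apply, id_eq, Prod.mk.injEq] at hab''
    obtain ⟨rfl, hfb⟩ := hab''
    obtain rfl := hinj (M.arc_mem _ _ (hP.arc_of_mem hS' he)).2 (M.arc_mem _ _ hb').2 hfb
    rw [huniq S' ⟨hS', he⟩]

theorem not_hasCyclicAux_insert_image (hP : IsCherryCover M P)
    (hfix : ∀ v ∈ M.verts, f v = v ∨ f v ∉ M.verts)
    (hsink : ∀ v ∈ shapeEndpoints S₀, ∀ b, M.arc v b ≠ true) (hacyc : ¬ HasCyclicAux P) :
    ¬ HasCyclicAux (insert S₀ ((Prod.map id f '' ·) '' P)) := by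
  set Q := insert S₀ ((Prod.map id f '' ·) '' P)
  have hsource : ∀ C, ¬ AuxAdj Q S₀ C := by
    rintro C ⟨-, hC, v, hv, hvC⟩
    rcases hC with rfl | ⟨S, hS, rfl⟩
    · obtain ⟨w, hw⟩ := hvC
      exact hv.2 w hw
    · rw [shapeInternals_image_prodMap] at hvC
      obtain ⟨w, hw⟩ := hvC
      exact hsink v hv w (hP.arc_of_mem hS hw)
  have hlift : ∀ B C, Relation.TransGen (AuxAdj Q) B C → ∀ S₁ ∈ P, B = Prod.map id f '' S₁ →
      ∀ S₂ ∈ P, C = Prod.map id f '' S₂ → Relation.TransGen (AuxAdj P) S₁ S₂ := by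
    intro B C hBC
    induction hBC with
    | single h =>
      rintro S₁ hS₁ rfl S₂ hS₂ rfl
      exact .single ⟨hS₁, hS₂, directlyAbove_of_image hfix (hP.1 S₁ hS₁) (hP.1 S₂ hS₂) h.2.2⟩
    | @tail D C _ hDC ih =>
      rintro S₁ hS₁ rfl S₂ hS₂ rfl
      rcases hDC.1 with rfl | ⟨S, hS, rfl⟩
      · exact absurd hDC (hsource _)
      · exact (ih S₁ hS₁ rfl S hS rfl).tail
          ⟨hS, hS₂, directlyAbove_of_image hfix (hP.1 S hS) (hP.1 S₂ hS₂) hDC.2.2⟩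
  rintro ⟨s, hs, hcyc⟩
  rcases hs with rfl | ⟨S, hS, rfl⟩
  · obtain ⟨C, hC, -⟩ := Relation.TransGen.head'_iff.1 hcyc
    exact hsource C hC
  · exact hacyc ⟨S, hS, hlift _ _ hcyc S hS rfl S hS rfl⟩

/-- The lifted cover consists of `S₀` and the images of the shapes of `M` under
`(a, b) ↦ (a, f b)`; `S₀` is a sink of its auxiliary graph. -/
theorem HasAcyclicCherryCover.of_lift (hroot : M.root = N.root)
    (harc : ∀ a b, M.arc a b = true → N.arc a (f b) = true) (hinj : Set.InjOn f M.verts)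
    (hfix : ∀ v ∈ M.verts, f v = v ∨ f v ∉ M.verts) (hret : ∀ v, IsRet M v → f v = v)
    (hS₀ : IsCherryShape N S₀ ∨ IsRetCherryShape N S₀)
    (hdel : ∀ v ∈ shapeInternals S₀, v ∉ M.verts)
    (hsink : ∀ v ∈ shapeEndpoints S₀, ∀ b, M.arc v b ≠ true)
    (hcover : ∀ a b, N.arc a b = true → (a, b) ∈ S₀ ∨ ∃ b', M.arc a b' = true ∧ f b' = b) :
    HasAcyclicCherryCover M → HasAcyclicCherryCover N := fun ⟨_, hP, hacyc⟩ =>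
  ⟨_, isCherryCover_insert_image hP hroot harc hinj hfix hret hS₀ hdel hcover,
    not_hasCyclicAux_insert_image hP hfix hsink hacyc⟩

end LiftCover

section Reductions

variable {N M : Network} {x y : ℕ}

theorem hasAcyclicCherryCover_of_isSingleLeaf (hN : IsSingleLeaf N) : HasAcyclicCherryCover N := by
  obtain ⟨x, -, hverts⟩ := hN
  refine ⟨∅, ⟨fun S hS => hS.elim, fun a b hab ha => absurd hab ?_⟩, fun ⟨_, hs, _⟩ => hs⟩
  have hmem := N.arc_mem a b hab
  simp only [hverts, Finset.mem_insert, Finset.mem_singleton] at hmem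
  obtain ⟨rfl | rfl, rfl | rfl⟩ := hmem
  all_goals first
    | exact absurd rfl ha
    | exact fun h => N.head_ne_root h rfl
    | exact fun h => N.ne_of_arc h rfl

theorem arc_cases_of_cherry {p q a b : ℕ} (hx : IsLeaf N x) (hy : IsLeaf N y) (hxy : x ≠ y)
    (hpx : N.arc p x = true) (hpy : N.arc p y = true) (hqp : N.arc q p = true)
    (hab : N.arc a b = true) :
    a = p ∧ (b = x ∨ b = y) ∨ a = q ∧ b = p ∨ a ≠ p ∧ b ≠ p ∧ b ≠ x ∧ b ≠ y := by
  by_cases hap : a = p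
  · subst hap
    exact .inl ⟨rfl, N.child_eq_or_eq hpx hpy hxy hab⟩
  by_cases hbp : b = p
  · subst hbp
    exact .inr (.inl ⟨N.parent_unique_of_two_children hpx hpy hxy hab hqp, rfl⟩)
  refine .inr (.inr ⟨hap, hbp, fun h => hap ?_, fun h => hap ?_⟩)
  exacts [hx.parent_unique (h ▸ hab) hpx, hy.parent_unique (h ▸ hab) hpy]

theorem arc_cases_of_retCherry {px py z q a b : ℕ} (hx : IsLeaf N x) (hy : IsLeaf N y)
    (hr : IsRet N px) (hpx : N.arc px x = true) (hpy : N.arc py px = true)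
    (hpyy : N.arc py y = true) (hz : N.arc z px = true) (hzpy : z ≠ py) (hq : N.arc q py = true)
    (hypx : y ≠ px) (hab : N.arc a b = true) :
    a = px ∧ b = x ∨ a = py ∧ (b = px ∨ b = y) ∨ a = z ∧ b = px ∨ a = q ∧ b = py ∨
      a ≠ px ∧ a ≠ py ∧ b ≠ px ∧ b ≠ py ∧ b ≠ x ∧ b ≠ y := by
  by_cases hapx : a = px
  · subst hapx
    exact .inl ⟨rfl, hr.eq_of_arc hab hpx⟩
  by_cases hapy : a = py
  · subst hapy
    exact .inr (.inl ⟨rfl, N.child_eq_or_eq hpy hpyy hypx.symm hab⟩)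
  by_cases hbpx : b = px
  · subst hbpx
    exact .inr (.inr (.inl ⟨(N.parent_eq_or_eq hpy hz hzpy.symm hab).resolve_left hapy, rfl⟩))
  by_cases hbpy : b = py
  · subst hbpy
    exact .inr (.inr (.inr (.inl
      ⟨N.parent_unique_of_two_children hpy hpyy hypx.symm hab hq, rfl⟩)))
  refine .inr (.inr (.inr (.inr ⟨hapx, hapy, hbpx, hbpy, fun h => hapx ?_, fun h => hapy ?_⟩)))
  exacts [hx.parent_unique (h ▸ hab) hpx, hy.parent_unique (h ▸ hab) hpyy]

theorem ReducesCherry.hasAcyclicCherryCover (hred : ReducesCherry N M x y) :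
    HasAcyclicCherryCover M → HasAcyclicCherryCover N := by
  obtain ⟨p, q, hx, hy, hxy, hpx, hpy, hqp, hverts, hroot, hiff⟩ := hred
  have hpM : p ∉ M.verts := by simp [hverts]
  have hxM : x ∉ M.verts := by simp [hverts]
  have hqy : q ≠ y := fun h => hy.not_arc (h ▸ hqp)
  have hMy : ∀ a, M.arc a y = true → a = q := fun a h => by
    rcases (hiff a y).1 h with ⟨h, hap, -⟩ | ⟨rfl, -⟩
    exacts [absurd (hy.parent_unique h hpy) hap, rfl]
  refine HasAcyclicCherryCover.of_lift (f := fun v => if v = y then p else v)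
    (S₀ := {(p, x), (p, y)}) hroot ?harc ?hinj ?hfix ?hret (.inl ⟨p, x, y, hxy, hpx, hpy, rfl⟩)
    ?hdel ?hsink ?hcover
  case harc =>
    intro a b hab
    rcases (hiff a b).1 hab with ⟨h, hap, -⟩ | ⟨rfl, rfl⟩
    · rwa [if_neg fun hb : b = y => hap (hy.parent_unique (hb ▸ h) hpy)]
    · rwa [if_pos rfl]
  case hinj =>
    intro v hv w hw hvw
    dsimp only at hvw
    split_ifs at hvw <;> grind
  case hfix =>
    intro v _
    split_ifs <;> simp [hpM]
  case hret =>
    intro v hv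
    rw [if_neg]
    rintro rfl
    obtain ⟨u, w, huw, hu, hw⟩ := hv.exists_two_parents
    exact huw ((hMy u hu).trans (hMy w hw).symm)
  case hdel => simpa using hpM
  case hsink =>
    rintro v ⟨⟨a, hav⟩, -⟩ b hvb
    simp only [Set.mem_insert_iff, Set.mem_singleton_iff, Prod.mk.injEq] at hav
    rcases hav with ⟨-, rfl⟩ | ⟨-, rfl⟩
    · exact hxM (M.arc_mem _ _ hvb).1
    · rcases (hiff v b).1 hvb with ⟨h, -⟩ | ⟨h, -⟩
      exacts [hy.not_arc h, hqy h.symm]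
  case hcover =>
    intro a b hab
    rcases arc_cases_of_cherry hx hy hxy hpx hpy hqp hab with
      ⟨rfl, rfl | rfl⟩ | ⟨rfl, rfl⟩ | ⟨hap, hbp, hbx, hby⟩
    · exact .inl (by simp)
    · exact .inl (by simp)
    · exact .inr ⟨y, (hiff a y).2 (.inr ⟨rfl, rfl⟩), if_pos rfl⟩
    · exact .inr ⟨b, (hiff a b).2 (.inl ⟨hab, hap, hbp, hbx⟩), if_neg hby⟩

theorem ReducesRetCherry.hasAcyclicCherryCover (hred : ReducesRetCherry N M x y) :
    HasAcyclicCherryCover M → HasAcyclicCherryCover N := by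
  obtain ⟨px, py, z, q, hx, hy, hr, hpx, hpy, hpyy, hz, hzpy, hq, hverts, hroot, hiff⟩ := hred
  have hpxM : px ∉ M.verts := by simp [hverts]
  have hpyM : py ∉ M.verts := by simp [hverts]
  have hypx : y ≠ px := fun h => by simpa [h, hr.2] using hy.2.1
  have hxy : x ≠ y := fun h => N.ne_of_arc hpy (hy.parent_unique hpyy (h ▸ hpx))
  have hMx : ∀ a, M.arc a x = true → a = z := fun a h => by
    rcases (hiff a x).1 h with ⟨h, hapx, -⟩ | ⟨rfl, -⟩ | ⟨-, h'⟩
    exacts [absurd (hx.parent_unique h hpx) hapx, rfl, absurd h' hxy]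
  have hMy : ∀ a, M.arc a y = true → a = q := fun a h => by
    rcases (hiff a y).1 h with ⟨h, -, hapy, -⟩ | ⟨-, h'⟩ | ⟨rfl, -⟩
    exacts [absurd (hy.parent_unique h hpyy) hapy, absurd h' hxy.symm, rfl]
  refine HasAcyclicCherryCover.of_lift
    (f := fun v => if v = x then px else if v = y then py else v)
    (S₀ := {(px, x), (py, px), (py, y)}) hroot ?harc ?hinj ?hfix ?hret
    (.inr ⟨x, y, px, py, hr, hpx, hpy, hpyy, hypx, rfl⟩) ?hdel ?hsink ?hcover
  case harc =>
    intro a b hab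
    rcases (hiff a b).1 hab with ⟨h, hapx, hapy, -⟩ | ⟨rfl, rfl⟩ | ⟨rfl, rfl⟩
    · rwa [if_neg fun hb : b = x => hapx (hx.parent_unique (hb ▸ h) hpx),
        if_neg fun hb : b = y => hapy (hy.parent_unique (hb ▸ h) hpyy)]
    · rwa [if_pos rfl]
    · rwa [if_neg hxy.symm, if_pos rfl]
  case hinj =>
    intro v hv w hw hvw
    dsimp only at hvw
    split_ifs at hvw <;> grind [N.ne_of_arc hpy]
  case hfix =>
    intro v _
    split_ifs <;> simp [hpxM, hpyM]
  case hret =>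
    intro v hv
    obtain ⟨u, w, huw, hu, hw⟩ := hv.exists_two_parents
    rw [if_neg, if_neg]
    · rintro rfl
      exact huw ((hMy u hu).trans (hMy w hw).symm)
    · rintro rfl
      exact huw ((hMx u hu).trans (hMx w hw).symm)
  case hdel => simpa using ⟨hpxM, hpyM⟩
  case hsink =>
    rintro v ⟨⟨a, hav⟩, hv⟩ b hvb
    simp only [Set.mem_insert_iff, Set.mem_singleton_iff, Prod.mk.injEq] at hav
    obtain ⟨-, rfl⟩ | ⟨-, rfl⟩ | ⟨-, rfl⟩ := hav
    · rcases (hiff v b).1 hvb with ⟨h, -⟩ | ⟨rfl, -⟩ | ⟨rfl, -⟩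
      exacts [hx.not_arc h, hx.not_arc hz, hx.not_arc hq]
    · exact hv x (Set.mem_insert _ _)
    · rcases (hiff v b).1 hvb with ⟨h, -⟩ | ⟨rfl, -⟩ | ⟨rfl, -⟩
      exacts [hy.not_arc h, hy.not_arc hz, hy.not_arc hq]
  case hcover =>
    intro a b hab
    rcases arc_cases_of_retCherry hx hy hr hpx hpy hpyy hz hzpy hq hypx hab with
      ⟨rfl, rfl⟩ | ⟨rfl, rfl | rfl⟩ | ⟨rfl, rfl⟩ | ⟨rfl, rfl⟩ | ⟨hapx, hapy, hbpx, hbpy, hbx, hby⟩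
    iterate 3 exact .inl (by simp)
    · exact .inr ⟨x, (hiff a x).2 (.inr (.inl ⟨rfl, rfl⟩)), if_pos rfl⟩
    · exact .inr ⟨y, (hiff a y).2 (.inr (.inr ⟨rfl, rfl⟩)), by simp [hxy.symm]⟩
    · exact .inr ⟨b, (hiff a b).2 (.inl ⟨hab, hapx, hapy, hbpx, hbpy⟩), by simp [hbx, hby]⟩

theorem IsOrchard.hasAcyclicCherryCover (hN : IsOrchard N) : HasAcyclicCherryCover N := by
  obtain ⟨N', hsteps, hleaf⟩ := hN
  induction hsteps using Relation.ReflTransGen.head_induction_on with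
  | refl => exact hasAcyclicCherryCover_of_isSingleLeaf hleaf
  | head hstep _ ih =>
    obtain ⟨x, y, hred | hred⟩ := hstep
    exacts [hred.hasAcyclicCherryCover ih, hred.hasAcyclicCherryCover ih]

end Reductions

/-- Lists are 0-indexed: `a_m` is entry `m - 1`. -/
theorem nfence_paths_force_cyclic_cover_general (N : Network)
    (A B : List (ℕ × ℕ)) (hA : IsNFence N A) (hB : IsNFence N B)
    (hAord : IsRet N ((A.headD (0, 0)).1)) (hBord : IsRet N ((B.headD (0, 0)).1))
    (h i j k : ℕ)
    (hh : Even h) (hi : Even i) (hj : Even j) (hk : Even k)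
    (hk1 : 1 ≤ k) (hi1 : 1 ≤ i) (hkh : k < h) (hij : i < j)
    (hhA : h ≤ A.length) (hjB : j ≤ B.length)
    (path1 : Relation.ReflTransGen (fun a b : ℕ => N.arc a b = true)
      ((A.getD (h - 1) (0, 0)).2) ((B.getD (i - 1) (0, 0)).1))
    (path2 : Relation.ReflTransGen (fun a b : ℕ => N.arc a b = true)
      ((B.getD (j - 1) (0, 0)).2) ((A.getD (k - 1) (0, 0)).1)) :
    (∀ P : Set (Set (ℕ × ℕ)), IsCherryCover N P → HasCyclicAux P) ∧
      ¬ IsOrchard N := by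
  have hcyclic : ∀ P, IsCherryCover N P → HasCyclicAux P := by
    intro P hP
    obtain ⟨h, rfl⟩ := hh
    obtain ⟨i, rfl⟩ := hi
    obtain ⟨j, rfl⟩ := hj
    obtain ⟨k, rfl⟩ := hk
    have hAodd := hA.2.1
    have hBodd := hB.2.1
    simp only [List.headD_eq_head?_getD, List.head?_eq_getElem?] at hAord hBord
    refine hP.hasCyclicAux_of_fence_paths (h := h - 1) (i := i - 1) (j := j - 1) (k := k - 1)
      hA.1.1 hB.1.1 (by simpa) (by simpa) (by omega) (by omega) (by omega) (by omega) ?_ ?_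
    · convert path1 using 3 <;> omega
    · convert path2 using 3 <;> omega
  exact ⟨hcyclic, fun hN => hN.hasAcyclicCherryCover.elim fun P hP => hP.2 (hcyclic P hP.1)⟩

/-- If a tree-based network has two N-fences of length ≥ 3 with
directed paths from `head(a^u_h)` to `tail(a^v_i)` and from `head(a^v_j)` to
`tail(a^u_k)` for even `h, i, j, k` with `k < h` and `i < j`, then the auxiliary
graph of every cherry cover contains a directed cycle, and `N` is not orchard.
(Lists are 0-indexed: `a_m` is entry `m - 1`.) -/
theorem nfence_paths_force_cyclic_cover (N : Network) (hTB : IsTreeBased N)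
    (A B : List (ℕ × ℕ)) (hA : IsNFence N A) (hB : IsNFence N B)
    (hA3 : 3 ≤ A.length) (hB3 : 3 ≤ B.length)
    (hAord : IsRet N ((A.headD (0, 0)).1)) (hBord : IsRet N ((B.headD (0, 0)).1))
    (h i j k : ℕ)
    (hh : Even h) (hi : Even i) (hj : Even j) (hk : Even k)
    (hk1 : 1 ≤ k) (hi1 : 1 ≤ i) (hkh : k < h) (hij : i < j)
    (hhA : h ≤ A.length) (hjB : j ≤ B.length)
    (path1 : Relation.ReflTransGen (fun a b : ℕ => N.arc a b = true)
      ((A.getD (h - 1) (0, 0)).2) ((B.getD (i - 1) (0, 0)).1))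
    (path2 : Relation.ReflTransGen (fun a b : ℕ => N.arc a b = true)
      ((B.getD (j - 1) (0, 0)).2) ((A.getD (k - 1) (0, 0)).1)) :
    (∀ P : Set (Set (ℕ × ℕ)), IsCherryCover N P → HasCyclicAux P) ∧
      ¬ IsOrchard N :=
  nfence_paths_force_cyclic_cover_general N A B hA hB hAord hBord h i j k hh hi hj hk hk1 hi1 hkh
    hij hhA hjB path1 path2

end PhyloNet
end

section
/- If a network N_G is obtained from a 3-regular graph G by the vertex-cover reduction, then N_G is tree-based. -/
/-!
Every reticulation of `N_G` lies in a gadget: `R_0` has parents `M_4` and `M_1`, `R_1` has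
parents `R_0` and `W_1`, and `R_i` (`2 ≤ i ≤ 7`) has parents `W_{i-1}` and `W_i`. Deleting the
arcs `M_1 R_0` and `W_i R_i` leaves every non-root vertex with exactly one parent, and every
vertex that is not a leaf of `N_G` keeps a child: `M_1` keeps `W_4`, `W_i` keeps `R_{i+1}`,
`W_7` keeps `L_5`, and no other arc is deleted. This spanning tree has only leaves of `N_G` as
leaves, so `N_G` is tree-based. Three-regularity is what makes each port `W_1, W_2, W_3`
(resp. `R_5, R_6, R_7`) of a gadget the head (resp. tail) of exactly one inter-gadget arc.
-/

namespace PhyloNet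

theorem isTreeBased_of_existsUnique_parent (N : Network) (D : ℕ → ℕ → Prop)
    (hpar : ∀ v ∈ N.verts, v ≠ N.root → ∃! u, u ∈ N.verts ∧ N.arc u v = true ∧ ¬ D u v)
    (hchild : ∀ v ∈ N.verts, ¬ IsLeaf N v → ∃ w, N.arc v w = true ∧ ¬ D v w) :
    IsTreeBased N := by
  classical
  refine ⟨fun a b => N.arc a b && !decide (D a b), fun a b h => by simp_all, ?_, ?_⟩
  · intro v hv hvr
    obtain ⟨u, hu, huniq⟩ := hpar v hv hvr
    refine Finset.card_eq_one.mpr ⟨u, Finset.ext fun u' => ?_⟩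
    simp only [Finset.mem_filter, Finset.mem_singleton, Bool.and_eq_true, Bool.not_eq_true',
      decide_eq_false_iff_not]
    exact ⟨huniq u', fun h => h ▸ hu⟩
  · intro v hv hleaf
    obtain ⟨w, hw, hD⟩ := hchild v hv hleaf
    exact ⟨w, by simp [hw, hD]⟩

theorem isLeaf_of_forall_arc_ne_true (N : Network) {v : ℕ} (hv : v ∈ N.verts)
    (hvr : v ≠ N.root) (hout : ∀ w, N.arc v w ≠ true) : IsLeaf N v := by
  have h0 : outDeg N v = 0 :=
    Finset.card_eq_zero.mpr (Finset.filter_false_of_mem fun w _ => hout w)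
  rcases N.nonroot_deg v hv hvr with ⟨-, h2⟩ | ⟨-, h1⟩ | ⟨h1, -⟩
  · exact absurd h2 (by simp_all [outDeg])
  · exact absurd h1 (by simp_all [outDeg])
  · exact ⟨hv, h1, h0⟩

theorem bijOn_Icc_of_existsUnique {α : Type} {e : ℕ → α} {n : ℕ}
    (he : ∀ v, ∃! i, 1 ≤ i ∧ i ≤ n ∧ e i = v) : Set.BijOn e (Set.Icc 1 n) Set.univ := by
  refine ⟨Set.mapsTo_univ _ _, fun i hi j hj hij => ?_, fun v _ => ?_⟩
  · obtain ⟨k, -, hk⟩ := he (e j)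
    exact (hk i ⟨hi.1, hi.2, hij⟩).trans (hk j ⟨hj.1, hj.2, rfl⟩).symm
  · obtain ⟨i, ⟨hi, hi', rfl⟩, -⟩ := he v
    exact ⟨i, ⟨hi, hi'⟩, rfl⟩

section PortNumbering

variable {α : Type} [Fintype α] {G : SimpleGraph α} [DecidableRel G.Adj]

def IsPortNumbering (G : SimpleGraph α) (f : α → α → ℕ) (s : Set ℕ) : Prop :=
  ∀ v, Set.BijOn (f v) (G.neighborSet v) s

theorem isPortNumbering_of_injOn {d : ℕ} (hreg : G.IsRegularOfDegree d) {f : α → α → ℕ}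
    {s : Finset ℕ} (hs : s.card = d) (hmaps : ∀ v u, G.Adj v u → f v u ∈ s)
    (hinj : ∀ v u u', G.Adj v u → G.Adj v u' → f v u = f v u' → u = u') :
    IsPortNumbering G f s := by
  intro v
  have hinjOn : Set.InjOn (f v) (G.neighborFinset v) := fun u hu u' hu' h =>
    hinj v u u' (by simpa using hu) (by simpa using hu') h
  have himage : (G.neighborFinset v).image (f v) = s :=
    Finset.eq_of_subset_of_card_le
      (Finset.image_subset_iff.mpr fun u hu => hmaps v u (by simpa using hu))
      (by rw [Finset.card_image_of_injOn hinjOn, hs, G.card_neighborFinset_eq_degree, hreg v])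
  refine ⟨fun u hu => hmaps v u hu, by simpa using hinjOn, ?_⟩
  rw [← himage, Finset.coe_image]
  simp [Set.SurjOn]

end PortNumbering

/-- The vertices of a vertex-cover reduction network by their role, indexed as in
`IsVCReduction`: `r v i` stands for `R v i`, and so on. -/
inductive VCSite (α : Type) : Type
  | r (v : α) (i : ℕ)
  | w (v : α) (i : ℕ)
  | l (v : α) (i : ℕ)
  | m (v : α) (i : ℕ)
  | p (v : α)
  | s (i : ℕ)
  | root

namespace VCSite

variable {α : Type}

def IsValid (n : ℕ) : VCSite α → Prop
  | r _ i => i ≤ 7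
  | w _ i => 1 ≤ i ∧ i ≤ 7
  | l _ i => 1 ≤ i ∧ i ≤ 5
  | m _ i => 1 ≤ i ∧ i ≤ 4
  | p _ => True
  | s i => 1 ≤ i ∧ i ≤ n - 1
  | root => True

def label (R W L M : α → ℕ → ℕ) (P : α → ℕ) (S : ℕ → ℕ) (rho : ℕ) : VCSite α → ℕ
  | r v i => R v i
  | w v i => W v i
  | l v i => L v i
  | m v i => M v i
  | p v => P v
  | s i => S i
  | root => rho

/-- The valid sites, enumerated by the domain on which `IsVCReduction` asks for injectivity. -/
def ofSum {n : ℕ} :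
    (α × Fin 8) ⊕ (α × Fin 7) ⊕ (α × Fin 5) ⊕ (α × Fin 4) ⊕ α ⊕ Fin (n - 1) ⊕ Unit → VCSite α
  | .inl (v, i) => r v i
  | .inr (.inl (v, i)) => w v (i + 1)
  | .inr (.inr (.inl (v, i))) => l v (i + 1)
  | .inr (.inr (.inr (.inl (v, i)))) => m v (i + 1)
  | .inr (.inr (.inr (.inr (.inl v)))) => p v
  | .inr (.inr (.inr (.inr (.inr (.inl i))))) => s (i + 1)
  | .inr (.inr (.inr (.inr (.inr (.inr _))))) => root

theorem range_ofSum {n : ℕ} : Set.range (ofSum (α := α) (n := n)) = {x | x.IsValid n} := by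
  ext x
  constructor
  · rintro ⟨z, rfl⟩
    rcases z with ⟨v, i⟩ | ⟨v, i⟩ | ⟨v, i⟩ | ⟨v, i⟩ | v | i | -
    all_goals simp only [ofSum, IsValid, Set.mem_ofPred_eq] <;> omega
  · intro hx
    rcases x with ⟨v, i⟩ | ⟨v, i⟩ | ⟨v, i⟩ | ⟨v, i⟩ | v | i | - <;>
      simp only [IsValid, Set.mem_ofPred_eq] at hx
    · exact ⟨.inl (v, ⟨i, by omega⟩), rfl⟩
    · exact ⟨.inr (.inl (v, ⟨i - 1, by omega⟩)), by simp only [ofSum]; congr; omega⟩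
    · exact ⟨.inr (.inr (.inl (v, ⟨i - 1, by omega⟩))), by simp only [ofSum]; congr; omega⟩
    · exact ⟨.inr (.inr (.inr (.inl (v, ⟨i - 1, by omega⟩)))), by simp only [ofSum]; congr; omega⟩
    · exact ⟨.inr (.inr (.inr (.inr (.inl v)))), rfl⟩
    · exact ⟨.inr (.inr (.inr (.inr (.inr (.inl ⟨i - 1, by omega⟩))))),
        by simp only [ofSum]; congr; omega⟩
    · exact ⟨.inr (.inr (.inr (.inr (.inr (.inr ()))))), rfl⟩

/-- The arcs deleted to obtain the base tree: one of the two incoming arcs of each reticulation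
`r v i` of a gadget. -/
def IsDropped (x y : VCSite α) : Prop :=
  ∃ v, (x = m v 1 ∧ y = r v 0) ∨ ∃ i, 1 ≤ i ∧ i ≤ 7 ∧ x = w v i ∧ y = r v i

theorem IsDropped.isValid {n : ℕ} {x y : VCSite α} (h : x.IsDropped y) :
    x.IsValid n ∧ y.IsValid n := by
  obtain ⟨v, ⟨rfl, rfl⟩ | ⟨i, hi, hi', rfl, rfl⟩⟩ := h <;> simp [IsValid]; omega

end VCSite

section Gadget

open VCSite

variable {α : Type} {β : Type*}

/-- The arc relation of `IsVCReduction`, with the vertex `R v i` written `ℓ (r v i)`, and so on. -/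
def VCArc (G : SimpleGraph α) (n : ℕ) (e : ℕ → α) (pi tau : α → α → ℕ) (ℓ : VCSite α → β)
    (a b : β) : Prop :=
  (a = ℓ root ∧ b = ℓ (s 1)) ∨
  (∃ i, 1 ≤ i ∧ i ≤ n - 2 ∧ a = ℓ (s i) ∧ b = ℓ (s (i + 1))) ∨
  (∃ i, 1 ≤ i ∧ i ≤ n - 1 ∧ a = ℓ (s i) ∧ b = ℓ (p (e i))) ∨
  (a = ℓ (s (n - 1)) ∧ b = ℓ (p (e n))) ∨
  (∃ v, a = ℓ (p v) ∧ (b = ℓ (m v 4) ∨ b = ℓ (w v 7))) ∨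
  (∃ v, a = ℓ (m v 4) ∧ (b = ℓ (m v 3) ∨ b = ℓ (r v 0))) ∨
  (∃ v, a = ℓ (m v 3) ∧ (b = ℓ (m v 2) ∨ b = ℓ (w v 6))) ∨
  (∃ v, a = ℓ (m v 2) ∧ (b = ℓ (m v 1) ∨ b = ℓ (w v 5))) ∨
  (∃ v, a = ℓ (m v 1) ∧ (b = ℓ (r v 0) ∨ b = ℓ (w v 4))) ∨
  (∃ v, a = ℓ (r v 0) ∧ b = ℓ (r v 1)) ∨
  (∃ v i, 1 ≤ i ∧ i ≤ 6 ∧ a = ℓ (w v i) ∧ (b = ℓ (r v i) ∨ b = ℓ (r v (i + 1)))) ∨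
  (∃ v, a = ℓ (w v 7) ∧ (b = ℓ (r v 7) ∨ b = ℓ (l v 5))) ∨
  (∃ v i, 1 ≤ i ∧ i ≤ 4 ∧ a = ℓ (r v i) ∧ b = ℓ (l v i)) ∨
  (∃ u v, G.Adj u v ∧ a = ℓ (r u (tau u v)) ∧ b = ℓ (w v (pi v u)))

/-- The vertex set of `IsVCReduction`, written as `VCArc` writes the arcs. -/
def VCVert (n : ℕ) (ℓ : VCSite α → β) (a : β) : Prop :=
  (∃ v i, i ≤ 7 ∧ a = ℓ (r v i)) ∨ (∃ v i, 1 ≤ i ∧ i ≤ 7 ∧ a = ℓ (w v i)) ∨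
  (∃ v i, 1 ≤ i ∧ i ≤ 5 ∧ a = ℓ (l v i)) ∨ (∃ v i, 1 ≤ i ∧ i ≤ 4 ∧ a = ℓ (m v i)) ∨
  (∃ v, a = ℓ (p v)) ∨ (∃ i, 1 ≤ i ∧ i ≤ n - 1 ∧ a = ℓ (s i)) ∨ a = ℓ root

theorem vcVert_iff {n : ℕ} {ℓ : VCSite α → β} {a : β} :
    VCVert n ℓ a ↔ ∃ x : VCSite α, x.IsValid n ∧ ℓ x = a := by
  constructor
  · rintro (⟨v, i, hi, rfl⟩ | ⟨v, i, hi, hi', rfl⟩ | ⟨v, i, hi, hi', rfl⟩ |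
      ⟨v, i, hi, hi', rfl⟩ | ⟨v, rfl⟩ | ⟨i, hi, hi', rfl⟩ | rfl)
    exacts [⟨r v i, hi, rfl⟩, ⟨w v i, ⟨hi, hi'⟩, rfl⟩, ⟨l v i, ⟨hi, hi'⟩, rfl⟩,
      ⟨m v i, ⟨hi, hi'⟩, rfl⟩, ⟨p v, trivial, rfl⟩, ⟨s i, ⟨hi, hi'⟩, rfl⟩, ⟨root, trivial, rfl⟩]
  · rintro ⟨x, hx, rfl⟩
    rcases x with ⟨v, i⟩ | ⟨v, i⟩ | ⟨v, i⟩ | ⟨v, i⟩ | v | i | -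
    exacts [Or.inl ⟨v, i, hx, rfl⟩, Or.inr <| Or.inl ⟨v, i, hx.1, hx.2, rfl⟩,
      Or.inr <| Or.inr <| Or.inl ⟨v, i, hx.1, hx.2, rfl⟩,
      Or.inr <| Or.inr <| Or.inr <| Or.inl ⟨v, i, hx.1, hx.2, rfl⟩,
      Or.inr <| Or.inr <| Or.inr <| Or.inr <| Or.inl ⟨v, rfl⟩,
      Or.inr <| Or.inr <| Or.inr <| Or.inr <| Or.inr <| Or.inl ⟨i, hx.1, hx.2, rfl⟩,
      Or.inr <| Or.inr <| Or.inr <| Or.inr <| Or.inr <| Or.inr rfl]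

def VCSite.Arc (G : SimpleGraph α) (n : ℕ) (e : ℕ → α) (pi tau : α → α → ℕ) :
    VCSite α → VCSite α → Prop :=
  VCArc G n e pi tau id

variable {G : SimpleGraph α} {n : ℕ} {e : ℕ → α} {pi tau : α → α → ℕ}

theorem vcArc_iff_exists_arc {ℓ : VCSite α → β} (hn : 2 ≤ n)
    (hpi : IsPortNumbering G pi (Set.Icc 1 3)) (htau : IsPortNumbering G tau (Set.Icc 5 7))
    {a b : β} :
    VCArc G n e pi tau ℓ a b ↔ ∃ x y : VCSite α, x.IsValid n ∧ y.IsValid n ∧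
      VCSite.Arc G n e pi tau x y ∧ a = ℓ x ∧ b = ℓ y := by
  have hpi' : ∀ u v, G.Adj u v → pi v u ∈ Set.Icc 1 7 := fun u v h =>
    Set.Icc_subset_Icc le_rfl (by norm_num) ((hpi v).mapsTo h.symm)
  have htau' : ∀ u v, G.Adj u v → tau u v ≤ 7 := fun u v h => ((htau u).mapsTo h).2
  constructor
  · unfold VCArc
    rintro (⟨rfl, rfl⟩ | ⟨i, hi, hi', rfl, rfl⟩ | ⟨i, hi, hi', rfl, rfl⟩ | ⟨rfl, rfl⟩ |
      ⟨v, rfl, rfl | rfl⟩ | ⟨v, rfl, rfl | rfl⟩ | ⟨v, rfl, rfl | rfl⟩ | ⟨v, rfl, rfl | rfl⟩ |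
      ⟨v, rfl, rfl | rfl⟩ | ⟨v, rfl, rfl⟩ | ⟨v, i, hi, hi', rfl, rfl | rfl⟩ |
      ⟨v, rfl, rfl | rfl⟩ | ⟨v, i, hi, hi', rfl, rfl⟩ | ⟨u, v, huv, rfl, rfl⟩)
    all_goals refine ⟨_, _, ?_, ?_, ?_, rfl, rfl⟩
    all_goals simp_all [IsValid, VCSite.Arc, VCArc] <;> omega
  · rintro ⟨x, y, -, -, h, rfl, rfl⟩
    unfold VCSite.Arc VCArc at h
    rcases h with ⟨rfl, rfl⟩ | ⟨i, hi, hi', rfl, rfl⟩ | ⟨i, hi, hi', rfl, rfl⟩ | ⟨rfl, rfl⟩ |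
      ⟨v, rfl, rfl | rfl⟩ | ⟨v, rfl, rfl | rfl⟩ | ⟨v, rfl, rfl | rfl⟩ | ⟨v, rfl, rfl | rfl⟩ |
      ⟨v, rfl, rfl | rfl⟩ | ⟨v, rfl, rfl⟩ | ⟨v, i, hi, hi', rfl, rfl | rfl⟩ |
      ⟨v, rfl, rfl | rfl⟩ | ⟨v, i, hi, hi', rfl, rfl⟩ | ⟨u, v, huv, rfl, rfl⟩
    all_goals unfold VCArc; grind

namespace VCSite

/-- The two parents of a reticulation `r v i` are separated by `IsDropped`, the parent
`r u (tau u v)` of `w v i` is pinned down by the port numbering of `v`, and the parent of `p v`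
by the injectivity of `e`. -/
theorem eq_of_arc_of_not_isDropped (hpi : IsPortNumbering G pi (Set.Icc 1 3))
    (he : Set.InjOn e (Set.Icc 1 n)) {x x' y : VCSite α}
    (hx : Arc G n e pi tau x y) (hxd : ¬ x.IsDropped y)
    (hx' : Arc G n e pi tau x' y) (hxd' : ¬ x'.IsDropped y) : x = x' := by
  have hpi3 : ∀ v u, G.Adj u v → pi v u ≤ 3 := fun v u hu => ((hpi v).mapsTo hu.symm).2
  have hpi' : ∀ v u u', G.Adj u v → G.Adj u' v → pi v u = pi v u' → u = u' :=
    fun v u u' hu hu' h => (hpi v).injOn hu.symm hu'.symm h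
  have he' : ∀ i j, 1 ≤ i → i ≤ n → 1 ≤ j → j ≤ n → e i = e j → i = j :=
    fun i j hi hi' hj hj' h => he ⟨hi, hi'⟩ ⟨hj, hj'⟩ h
  cases y <;> simp [Arc, VCArc, IsDropped] at hx hxd hx' hxd' <;> grind

theorem exists_parent (hpi : IsPortNumbering G pi (Set.Icc 1 3))
    (htau : IsPortNumbering G tau (Set.Icc 5 7)) (he : Set.SurjOn e (Set.Icc 1 n) Set.univ)
    (hn : 2 ≤ n) {y : VCSite α} (hy : y.IsValid n) (hyr : y ≠ root) :
    ∃ x, x.IsValid n ∧ Arc G n e pi tau x y ∧ ¬ x.IsDropped y := by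
  rcases y with ⟨v, i⟩ | ⟨v, i⟩ | ⟨v, i⟩ | ⟨v, i⟩ | v | i | - <;> simp only [IsValid] at hy
  · rcases (by omega : i = 0 ∨ i = 1 ∨ 2 ≤ i) with rfl | rfl | hi
    · exact ⟨m v 4, by simp [IsValid, Arc, VCArc, IsDropped]⟩
    · exact ⟨r v 0, by simp [IsValid, Arc, VCArc, IsDropped]⟩
    · exact ⟨w v (i - 1), by simp [IsValid, Arc, VCArc, IsDropped]; omega⟩
  · rcases (by omega : i ≤ 3 ∨ 4 ≤ i ∧ i ≤ 6 ∨ i = 7) with hi | hi | rfl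
    · obtain ⟨u, hu, rfl⟩ := (hpi v).surjOn (show i ∈ Set.Icc 1 3 from ⟨hy.1, hi⟩)
      have hτ := (htau u).mapsTo (G.adj_symm hu)
      exact ⟨r u (tau u v), by
        simp [IsValid, Arc, VCArc, IsDropped]; exact ⟨hτ.2, G.adj_symm hu⟩⟩
    · exact ⟨m v (i - 3), by simp [IsValid, Arc, VCArc, IsDropped]; omega⟩
    · exact ⟨p v, by simp [IsValid, Arc, VCArc, IsDropped]⟩
  · rcases (by omega : i ≤ 4 ∨ i = 5) with hi | rfl
    · exact ⟨r v i, by simp [IsValid, Arc, VCArc, IsDropped]; omega⟩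
    · exact ⟨w v 7, by simp [IsValid, Arc, VCArc, IsDropped]⟩
  · rcases (by omega : i ≤ 3 ∨ i = 4) with hi | rfl
    · exact ⟨m v (i + 1), by simp [IsValid, Arc, VCArc, IsDropped]; omega⟩
    · exact ⟨p v, by simp [IsValid, Arc, VCArc, IsDropped]⟩
  · obtain ⟨k, ⟨hk, hk'⟩, rfl⟩ := he (Set.mem_univ v)
    rcases (by omega : k ≤ n - 1 ∨ k = n) with hk'' | rfl
    · exact ⟨s k, by simp [IsValid, Arc, VCArc, IsDropped]; omega⟩
    · exact ⟨s (k - 1), by simp [IsValid, Arc, VCArc, IsDropped]; omega⟩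
  · rcases (by omega : i = 1 ∨ 2 ≤ i) with rfl | hi
    · exact ⟨root, by simp [IsValid, Arc, VCArc, IsDropped]⟩
    · exact ⟨s (i - 1), by simp [IsValid, Arc, VCArc, IsDropped]; omega⟩
  · exact absurd rfl hyr

theorem exists_child (hpi : IsPortNumbering G pi (Set.Icc 1 3))
    (htau : IsPortNumbering G tau (Set.Icc 5 7)) (hn : 2 ≤ n) {x : VCSite α}
    (hx : x.IsValid n) (hxl : ∀ v i, x ≠ l v i) :
    ∃ y, y.IsValid n ∧ Arc G n e pi tau x y ∧ ¬ x.IsDropped y := by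
  rcases x with ⟨v, i⟩ | ⟨v, i⟩ | ⟨v, i⟩ | ⟨v, i⟩ | v | i | - <;> simp only [IsValid] at hx
  · rcases (by omega : i = 0 ∨ 1 ≤ i ∧ i ≤ 4 ∨ 5 ≤ i) with rfl | hi | hi
    · exact ⟨r v 1, by simp [IsValid, Arc, VCArc, IsDropped]⟩
    · exact ⟨l v i, by simp [IsValid, Arc, VCArc, IsDropped]; omega⟩
    · obtain ⟨u, hu, rfl⟩ := (htau v).surjOn (show i ∈ Set.Icc 5 7 from ⟨hi, hx⟩)
      have hπ := (hpi u).mapsTo (G.adj_symm hu)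
      exact ⟨w u (pi u v), by
        simp [IsValid, Arc, VCArc, IsDropped]; exact ⟨⟨hπ.1, hπ.2.trans (by norm_num)⟩, hu⟩⟩
  · rcases (by omega : i ≤ 6 ∨ i = 7) with hi | rfl
    · exact ⟨r v (i + 1), by simp [IsValid, Arc, VCArc, IsDropped]; omega⟩
    · exact ⟨l v 5, by simp [IsValid, Arc, VCArc, IsDropped]⟩
  · exact absurd rfl (hxl v i)
  · rcases (by omega : i = 1 ∨ 2 ≤ i) with rfl | hi
    · exact ⟨w v 4, by simp [IsValid, Arc, VCArc, IsDropped]⟩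
    · exact ⟨m v (i - 1), by simp [IsValid, Arc, VCArc, IsDropped]; omega⟩
  · exact ⟨m v 4, by simp [IsValid, Arc, VCArc, IsDropped]⟩
  · exact ⟨p (e i), by simp [IsValid, Arc, VCArc, IsDropped]; omega⟩
  · exact ⟨s 1, by simp [IsValid, Arc, VCArc, IsDropped]; omega⟩

theorem not_arc_l {v : α} {i : ℕ} {y : VCSite α} : ¬ Arc G n e pi tau (l v i) y := by
  simp [Arc, VCArc]

end VCSite

/-- `N` is the network of `IsVCReduction` with its vertices numbered by `ℓ`. -/
structure IsVCImage (N : Network) (G : SimpleGraph α) (n : ℕ) (e : ℕ → α)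
    (pi tau : α → α → ℕ) (ℓ : VCSite α → ℕ) : Prop where
  injOn : Set.InjOn ℓ {x | x.IsValid n}
  root_eq : N.root = ℓ root
  mem_verts : ∀ a, a ∈ N.verts ↔ VCVert n ℓ a
  arc_iff : ∀ a b, N.arc a b = true ↔ VCArc G n e pi tau ℓ a b

namespace IsVCImage

variable {N : Network} {ℓ : VCSite α → ℕ}

theorem mem_verts_iff (h : IsVCImage N G n e pi tau ℓ) {a : ℕ} :
    a ∈ N.verts ↔ ∃ x : VCSite α, x.IsValid n ∧ ℓ x = a :=
  (h.mem_verts a).trans vcVert_iff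

theorem ne_root (h : IsVCImage N G n e pi tau ℓ) {x : VCSite α} (hx : x.IsValid n)
    (hxr : x ≠ root) : ℓ x ≠ N.root := by
  rw [h.root_eq]
  exact fun hx' => hxr (h.injOn hx trivial hx')

theorem arc_iff_arc (h : IsVCImage N G n e pi tau ℓ) (hn : 2 ≤ n)
    (hpi : IsPortNumbering G pi (Set.Icc 1 3)) (htau : IsPortNumbering G tau (Set.Icc 5 7))
    {x y : VCSite α} (hx : x.IsValid n) (hy : y.IsValid n) :
    N.arc (ℓ x) (ℓ y) = true ↔ VCSite.Arc G n e pi tau x y := by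
  rw [h.arc_iff, vcArc_iff_exists_arc hn hpi htau]
  constructor
  · rintro ⟨x', y', hx', hy', hxy, hxx, hyy⟩
    rwa [h.injOn hx hx' hxx, h.injOn hy hy' hyy]
  · exact fun hxy => ⟨x, y, hx, hy, hxy, rfl, rfl⟩

theorem map_isDropped_iff (h : IsVCImage N G n e pi tau ℓ) {x y : VCSite α}
    (hx : x.IsValid n) (hy : y.IsValid n) :
    Relation.Map IsDropped ℓ ℓ (ℓ x) (ℓ y) ↔ x.IsDropped y := by
  constructor
  · rintro ⟨x', y', hd, hxx, hyy⟩
    rwa [h.injOn hx hd.isValid.1 hxx.symm, h.injOn hy hd.isValid.2 hyy.symm]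
  · exact fun hd => ⟨x, y, hd, rfl, rfl⟩

theorem existsUnique_parent (h : IsVCImage N G n e pi tau ℓ) (hn : 2 ≤ n)
    (hpi : IsPortNumbering G pi (Set.Icc 1 3)) (htau : IsPortNumbering G tau (Set.Icc 5 7))
    (he : Set.BijOn e (Set.Icc 1 n) Set.univ) {b : ℕ} (hb : b ∈ N.verts) (hbr : b ≠ N.root) :
    ∃! a, a ∈ N.verts ∧ N.arc a b = true ∧ ¬ Relation.Map IsDropped ℓ ℓ a b := by
  obtain ⟨y, hy, rfl⟩ := h.mem_verts_iff.1 hb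
  obtain ⟨x, hx, hxy, hd⟩ :=
    exists_parent hpi htau he.surjOn hn hy fun hyr => hbr (hyr ▸ h.root_eq.symm)
  refine ⟨ℓ x, ⟨h.mem_verts_iff.2 ⟨x, hx, rfl⟩, (h.arc_iff_arc hn hpi htau hx hy).2 hxy,
    (h.map_isDropped_iff hx hy).not.2 hd⟩, ?_⟩
  rintro a ⟨ha, hay, had⟩
  obtain ⟨x', hx', rfl⟩ := h.mem_verts_iff.1 ha
  rw [h.arc_iff_arc hn hpi htau hx' hy] at hay
  rw [h.map_isDropped_iff hx' hy] at had
  rw [eq_of_arc_of_not_isDropped hpi he.injOn hay had hxy hd]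

theorem exists_child (h : IsVCImage N G n e pi tau ℓ) (hn : 2 ≤ n)
    (hpi : IsPortNumbering G pi (Set.Icc 1 3)) (htau : IsPortNumbering G tau (Set.Icc 5 7))
    {a : ℕ} (ha : a ∈ N.verts) (hleaf : ¬ IsLeaf N a) :
    ∃ b, N.arc a b = true ∧ ¬ Relation.Map IsDropped ℓ ℓ a b := by
  obtain ⟨x, hx, rfl⟩ := h.mem_verts_iff.1 ha
  by_cases hxl : ∃ v i, x = l v i
  · obtain ⟨v, i, rfl⟩ := hxl
    refine absurd (isLeaf_of_forall_arc_ne_true N ha (h.ne_root hx nofun) fun b hb => ?_) hleaf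
    obtain ⟨y, hy, rfl⟩ := h.mem_verts_iff.1 (N.arc_mem _ _ hb).2
    exact not_arc_l ((h.arc_iff_arc hn hpi htau hx hy).1 hb)
  · simp only [not_exists] at hxl
    obtain ⟨y, hy, hxy, hd⟩ := VCSite.exists_child hpi htau hn hx hxl
    exact ⟨ℓ y, (h.arc_iff_arc hn hpi htau hx hy).2 hxy, (h.map_isDropped_iff hx hy).not.2 hd⟩

theorem isTreeBased (h : IsVCImage N G n e pi tau ℓ) (hn : 2 ≤ n)
    (hpi : IsPortNumbering G pi (Set.Icc 1 3)) (htau : IsPortNumbering G tau (Set.Icc 5 7))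
    (he : Set.BijOn e (Set.Icc 1 n) Set.univ) : IsTreeBased N :=
  isTreeBased_of_existsUnique_parent N _
    (fun _ hb hbr => h.existsUnique_parent hn hpi htau he hb hbr)
    (fun _ ha hleaf => h.exists_child hn hpi htau ha hleaf)

/-- Without a vertex of `G` and with `n < 2`, the only vertex left for the child `ℓ (s 1)` of the
root is the root itself, which would close a cycle. -/
theorem two_le_or_nonempty (h : IsVCImage N G n e pi tau ℓ) : 2 ≤ n ∨ Nonempty α := by
  by_contra! hc
  have harc : N.arc (ℓ root) (ℓ (s 1)) = true := (h.arc_iff _ _).2 (Or.inl ⟨rfl, rfl⟩)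
  obtain ⟨y, hy, hyS⟩ := h.mem_verts_iff.1 (N.arc_mem _ _ harc).2
  rcases y with ⟨v, _⟩ | ⟨v, _⟩ | ⟨v, _⟩ | ⟨v, _⟩ | v | i | _
  case s =>
    simp only [IsValid] at hy
    omega
  case root =>
    rw [← hyS] at harc
    exact N.acyclic _ (Relation.TransGen.single harc)
  all_goals exact hc.2.false v

end IsVCImage

end Gadget

/-- The network obtained from a 3-regular graph by the vertex-cover
reduction is tree-based. -/
theorem vcReduction_treeBased {α : Type} [Fintype α] [DecidableEq α]
    (G : SimpleGraph α) [DecidableRel G.Adj] (hreg : G.IsRegularOfDegree 3)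
    (N : Network) (hred : IsVCReduction G N) : IsTreeBased N := by
  obtain ⟨R, W, L, M, P, S, rho, e, pi, tau, he, hpi, hpiInj, htau, htauInj, hinj, hroot,
    hverts, harc⟩ := hred
  have hinj' : (VCSite.label R W L M P S rho ∘ VCSite.ofSum (n := Fintype.card α)).Injective := by
    convert hinj using 1
    funext z
    rcases z with ⟨v, i⟩ | ⟨v, i⟩ | ⟨v, i⟩ | ⟨v, i⟩ | v | i | - <;> rfl
  have hN : IsVCImage N G (Fintype.card α) e pi tau (VCSite.label R W L M P S rho) :=
    ⟨VCSite.range_ofSum ▸ hinj'.injOn_range, hroot, hverts, harc⟩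
  have hn : 2 ≤ Fintype.card α := hN.two_le_or_nonempty.elim id fun ⟨v⟩ => by
    have := G.degree_lt_card_verts v
    rw [hreg v] at this
    omega
  have hpi' : IsPortNumbering G pi (Set.Icc 1 3) := by
    have := isPortNumbering_of_injOn hreg (s := {1, 2, 3}) rfl (by simpa using hpi) hpiInj
    rwa [show (({1, 2, 3} : Finset ℕ) : Set ℕ) = Set.Icc 1 3 by ext; simp; omega] at this
  have htau' : IsPortNumbering G tau (Set.Icc 5 7) := by
    have := isPortNumbering_of_injOn hreg (s := {5, 6, 7}) rfl (by simpa using htau) htauInj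
    rwa [show (({5, 6, 7} : Finset ℕ) : Set ℕ) = Set.Icc 5 7 by ext; simp; omega] at this
  exact hN.isTreeBased hn hpi' htau' (bijOn_Icc_of_existsUnique he)

end PhyloNet
end
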